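/- arXiv:math/0601119 — 6 statements merged into one kernel-verified Lean document; each statement's English description precedes it below -/
import Mathlib

section
/- Let P be a partially ordered set. If P is well-quasi-ordered and the set 𝒥^¬↓(P) of non-principal ideals of P is finite, then P is better-quasi-ordered. -/
open Set

/-- `s` is an initial segment of the finite set `t` (w.r.t. increasing enumerations). -/
def InitSeg (s t : Finset ℕ) : Prop :=
  s ⊆ t ∧ ∀ x ∈ s, ∀ y ∈ t, y ∉ s → x < y

/-- `s` is an initial segment of the set `X ⊆ ℕ`. -/
def InitSegSet (s : Finset ℕ) (X : Set ℕ) : Prop :=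
  ↑s ⊆ X ∧ ∀ x ∈ s, ∀ y ∈ X, y ∉ s → x < y

/-- The union of a family of finite subsets of `ℕ`. -/
def unionOf (B : Set (Finset ℕ)) : Set ℕ := ⋃ s ∈ B, (s : Set ℕ)

/-- `B` is a block: `B` is infinite and every infinite subset of `⋃ B` has a nonempty
initial segment belonging to `B`. -/
def IsBlock (B : Set (Finset ℕ)) : Prop :=
  B.Infinite ∧ ∀ X : Set ℕ, X ⊆ unionOf B → X.Infinite →
    ∃ s ∈ B, s.Nonempty ∧ InitSegSet s X

/-- `B` is a barrier: a block no member of which is a proper subset of another member. -/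
def IsBarrier (B : Set (Finset ℕ)) : Prop :=
  IsBlock B ∧ ∀ s ∈ B, ∀ t ∈ B, s ⊆ t → s = t

/-- `B` is a thin block: a block which is an antichain under the initial-segment order. -/
def IsThinBlock (B : Set (Finset ℕ)) : Prop :=
  IsBlock B ∧ ∀ s ∈ B, ∀ t ∈ B, InitSeg s t → s = t

/-- `s ◁ t`: there is `r` such that `s` is a proper initial segment of `r` and `t` is
obtained from `r` by removing its least element. -/
def Tri (s t : Finset ℕ) : Prop :=
  ∃ r : Finset ℕ, InitSeg s r ∧ s ≠ r ∧ ∃ a ∈ r, (∀ b ∈ r, a ≤ b) ∧ t = r.erase a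

/-- The map `f` is good on `B` w.r.t. the quasi-order `le`. -/
def GoodPair {Q : Type*} (le : Q → Q → Prop) (B : Set (Finset ℕ)) (f : Finset ℕ → Q) : Prop :=
  ∃ s ∈ B, ∃ t ∈ B, Tri s t ∧ le (f s) (f t)

/-- A quasi-order is better-quasi-ordered if every map from every barrier into it is good. -/
def IsBqo {Q : Type*} (le : Q → Q → Prop) : Prop :=
  ∀ B : Set (Finset ℕ), IsBarrier B → ∀ f : Finset ℕ → Q, GoodPair le B f

/-- A quasi-order is well-quasi-ordered if it has no infinite strictly descending sequence
and no infinite antichain. -/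
def IsWqo {Q : Type*} (le : Q → Q → Prop) : Prop :=
  (¬ ∃ f : ℕ → Q, ∀ n, le (f (n + 1)) (f n) ∧ ¬ le (f n) (f (n + 1))) ∧
    ¬ ∃ f : ℕ → Q, ∀ m n : ℕ, m ≠ n → ¬ le (f m) (f n)

/-- The strict lexicographic order on finite subsets of `ℕ` (via increasing enumerations;
a proper initial segment is lexicographically smaller). -/
def lexLT (s t : Finset ℕ) : Prop :=
  List.Lex (· < ·) (s.sort (· ≤ ·)) (t.sort (· ≤ ·))

/-- The order type of `B` under the lexicographic order is at most `α`: there is a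
map of `B` into the ordinals `< α` which is strictly increasing w.r.t. `lexLT`. -/
def TypeLE (B : Set (Finset ℕ)) (α : Ordinal) : Prop :=
  ∃ g : Finset ℕ → Ordinal, (∀ s ∈ B, g s < α) ∧
    ∀ s ∈ B, ∀ t ∈ B, lexLT s t → g s < g t

/-- A quasi-order is `α`-better-quasi-ordered if every map from a barrier of order type
at most `α` into it is good. -/
def IsAlphaBqo (α : Ordinal) {Q : Type*} (le : Q → Q → Prop) : Prop :=
  ∀ B : Set (Finset ℕ), IsBarrier B → TypeLE B α →
    ∀ f : Finset ℕ → Q, GoodPair le B f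

/-- Domination quasi-order on subsets of a quasi-ordered set. -/
def DomRel {Q : Type*} (le : Q → Q → Prop) (A B : Set Q) : Prop :=
  ∀ a ∈ A, ∃ b ∈ B, le a b

/-- `I` is an ideal: nonempty, downward closed and up-directed. -/
def IsIdealRel {Q : Type*} (le : Q → Q → Prop) (I : Set Q) : Prop :=
  I.Nonempty ∧ (∀ x y, le x y → y ∈ I → x ∈ I) ∧
    ∀ x ∈ I, ∀ y ∈ I, ∃ z ∈ I, le x z ∧ le y z

/-- `I` is principal: it has a greatest element. -/
def IsPrincipalRel {Q : Type*} (le : Q → Q → Prop) (I : Set Q) : Prop :=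
  ∃ a ∈ I, ∀ x ∈ I, le x a

/-- A maximal antichain: an antichain not properly contained in any other antichain. -/
def IsMaxAntichainRel {Q : Type*} (le : Q → Q → Prop) (A : Set Q) : Prop :=
  IsAntichain le A ∧ ∀ B : Set Q, IsAntichain le B → A ⊆ B → A = B

/-- An interval order: no `a < b`, `c < d` with each of `a, b` incomparable to each
of `c, d`. -/
def IsIntervalOrder (P : Type*) [Preorder P] : Prop :=
  ¬ ∃ a b c d : P, a < b ∧ c < d ∧
    ¬ a ≤ c ∧ ¬ c ≤ a ∧ ¬ a ≤ d ∧ ¬ d ≤ a ∧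
    ¬ b ≤ c ∧ ¬ c ≤ b ∧ ¬ b ≤ d ∧ ¬ d ≤ b

/-- `a ≤_pred b` iff every strict predecessor of `a` is a strict predecessor of `b`. -/
def predLE {P : Type*} [PartialOrder P] (a b : P) : Prop := ∀ x, x < a → x < b

/-- `a ≤_succ b` iff every strict successor of `b` is a strict successor of `a`. -/
def succLE {P : Type*} [PartialOrder P] (a b : P) : Prop := ∀ y, b < y → a < y

/-- `a ≤_crit b` iff `a ≤_pred b` and `a ≤_succ b`. -/
def critLE {P : Type*} [PartialOrder P] (a b : P) : Prop := predLE a b ∧ succLE a b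

/-!
A bad map `f` on a barrier `B` is read on infinite sets `W ⊆ ⋃ B` as `v W = f (σ W)`, where `σ W`
is the member of `B` that begins `W`; badness says `v W ≰ v (W \ {min W})`. By Nash-Williams'
theorem for clopen colourings such a "level" can be restricted to an infinite set on which
(1) no block `σ W` is a singleton (the values on singleton blocks would form a bad sequence),
(2) the set of non-principal ideals containing `v W` is constant (it takes finitely many values),
(3) the comparisons between `v (W \ {min W})` and `v (dropBlock W)` are constant, where
`dropBlock W` also deletes the block following the head `σ W \ {min W}`.
Along a comb of sets sharing the head and deleting successive blocks, wqo then forces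
`v (W \ {min W}) ≤ v (dropBlock W)`, and (2) excludes strict inequality: the ideal generated by
the increasing values along the comb would contain `v W`. So `v (W \ {min W}) = v (dropBlock W)`,
which makes `v` on sets with a given head independent of what follows, and deleting `min X` yields
a new level whose blocks are the old ones minus that point. Iterating, the deleted points form an
infinite set `A`, and once all of `σ A` has been deleted the remaining block is empty.
-/

/-! ### Well-quasi-orders and non-principal ideals -/

theorem IsWqo.wellQuasiOrderedLE {P : Type*} [Preorder P] (h : IsWqo ((· ≤ ·) : P → P → Prop)) :
    WellQuasiOrderedLE P := by
  refine wellQuasiOrderedLE_iff.2 ⟨⟨wellFounded_iff_isEmpty_descending_chain.2 ⟨fun f => ?_⟩⟩,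
    fun s hs => ?_⟩
  · exact h.1 ⟨f, fun n => lt_iff_le_not_ge.1 (f.2 n)⟩
  · by_contra hinf
    let e := Set.Infinite.natEmbedding s hinf
    refine h.2 ⟨fun n => e n, fun m n hmn hle => ?_⟩
    exact hs (e m).2 (e n).2 (fun heq => hmn (e.injective (Subtype.ext heq))) hle

theorem Set.Infinite.exists_lt_le {P : Type*} [LE P] [WellQuasiOrderedLE P] {S : Set ℕ}
    (hS : S.Infinite) (g : ℕ → P) : ∃ x ∈ S, ∃ y ∈ S, x < y ∧ g x ≤ g y := by
  obtain ⟨m, n, hmn, hle⟩ := wellQuasiOrdered_le (g ∘ Nat.nth (· ∈ S))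
  exact ⟨_, Nat.nth_mem_of_infinite hS m, _, Nat.nth_mem_of_infinite hS n,
    Nat.nth_strictMono hS hmn, hle⟩

def nonPrincipalIdeals (P : Type*) [LE P] : Set (Set P) :=
  {I | IsIdealRel (· ≤ ·) I ∧ ¬ IsPrincipalRel (· ≤ ·) I}

theorem StrictMono.setOf_le_mem_nonPrincipalIdeals {P : Type*} [Preorder P] {u : ℕ → P}
    (hu : StrictMono u) : {p | ∃ n, p ≤ u n} ∈ nonPrincipalIdeals P := by
  refine ⟨⟨⟨u 0, 0, le_rfl⟩, fun x y hxy ⟨n, hn⟩ => ⟨n, hxy.trans hn⟩, ?_⟩, ?_⟩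
  · rintro x ⟨m, hm⟩ y ⟨n, hn⟩
    exact ⟨u (max m n), ⟨_, le_rfl⟩, hm.trans (hu.monotone (le_max_left m n)),
      hn.trans (hu.monotone (le_max_right m n))⟩
  · rintro ⟨a, ⟨n, han⟩, ha⟩
    exact (hu (Nat.lt_succ_self n)).not_ge ((ha _ ⟨n + 1, le_rfl⟩).trans han)

/-! ### Initial segments of infinite sets of naturals -/

def dropMin (X : Set ℕ) : Set ℕ := X \ {sInf X}

theorem dropMin_subset (X : Set ℕ) : dropMin X ⊆ X := sdiff_subset

theorem Set.Infinite.dropMin {X : Set ℕ} (h : X.Infinite) : (dropMin X).Infinite :=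
  h.sdiff (finite_singleton _)

theorem mem_dropMin {X : Set ℕ} {y : ℕ} : y ∈ dropMin X ↔ y ∈ X ∧ sInf X < y := by
  refine ⟨fun ⟨hy, hne⟩ => ⟨hy, lt_of_le_of_ne (Nat.sInf_le hy) (Ne.symm hne)⟩,
    fun ⟨hy, hlt⟩ => ⟨hy, hlt.ne'⟩⟩

theorem sInf_insert_of_lt {W : Set ℕ} {a : ℕ} (h : ∀ y ∈ W, a < y) : sInf (insert a W) = a :=
  IsLeast.csInf_eq ⟨mem_insert _ _, fun y hy => hy.elim (·.ge) (fun hy => (h y hy).le)⟩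

theorem dropMin_insert {W : Set ℕ} {a : ℕ} (h : ∀ y ∈ W, a < y) : dropMin (insert a W) = W := by
  ext y
  rw [mem_dropMin, sInf_insert_of_lt h, mem_insert_iff]
  exact ⟨fun ⟨hy, hlt⟩ => hy.resolve_left hlt.ne', fun hy => ⟨Or.inr hy, h y hy⟩⟩

theorem insert_sInf_dropMin {W : Set ℕ} (h : W.Nonempty) : insert (sInf W) (dropMin W) = W :=
  insert_sdiff_singleton.trans (insert_eq_of_mem (Nat.sInf_mem h))

theorem sInf_lt_of_mem_dropMin {X : Set ℕ} {y : ℕ} (hy : y ∈ dropMin X) : sInf X < y :=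
  (mem_dropMin.1 hy).2

namespace InitSegSet

variable {p q : Finset ℕ} {W W' : Set ℕ}

theorem subset_or_subset (hp : InitSegSet p W) (hq : InitSegSet q W) : p ⊆ q ∨ q ⊆ p := by
  by_contra! h
  obtain ⟨x, hxp, hxq⟩ := Finset.not_subset.1 h.1
  obtain ⟨y, hyq, hyp⟩ := Finset.not_subset.1 h.2
  exact lt_asymm (hp.2 x hxp y (hq.1 hyq) hyp) (hq.2 y hyq x (hp.1 hxp) hxq)

theorem sInf_mem (hp : InitSegSet p W) (hne : p.Nonempty) : sInf W ∈ p := by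
  obtain ⟨x, hx⟩ := hne
  by_contra h
  exact (hp.2 x hx _ (Nat.sInf_mem ⟨x, hp.1 hx⟩) h).not_ge (Nat.sInf_le (hp.1 hx))

theorem of_subset (hp : InitSegSet p W) (hq : InitSegSet q W) (hpq : p ⊆ q)
    (hq' : InitSegSet q W') : InitSegSet p W' := by
  refine ⟨(Finset.coe_subset.2 hpq).trans hq'.1, fun x hx y hy hyp => ?_⟩
  by_cases hyq : y ∈ q
  · exact hp.2 x hx y (hq.1 hyq) hyp
  · exact hq'.2 x (hpq hx) y hy hyq

theorem initSeg (hp : InitSegSet p W) (hq : InitSegSet q W) (hpq : p ⊆ q) : InitSeg p q :=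
  ⟨hpq, fun x hx y hy hyp => hp.2 x hx y (hq.1 hy) hyp⟩

theorem union_sdiff (hp : InitSegSet p W) : ↑p ∪ (W \ ↑p) = W := union_sdiff_cancel hp.1

theorem lt_of_mem_sdiff (hp : InitSegSet p W) {x y : ℕ} (hx : x ∈ p) (hy : y ∈ W \ ↑p) :
    x < y :=
  hp.2 x hx y hy.1 hy.2

end InitSegSet

theorem initSegSet_union {p : Finset ℕ} {T : Set ℕ} (h : ∀ x ∈ p, ∀ y ∈ T, x < y) :
    InitSegSet p (↑p ∪ T) :=
  ⟨subset_union_left, fun x hx y hy hyp => hy.elim (fun hy => absurd hy hyp) (h x hx y)⟩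

theorem initSegSet_union_union_iff {h q : Finset ℕ} {T : Set ℕ}
    (hq : ∀ x ∈ h, ∀ y ∈ q, x < y) (hT : ∀ x ∈ h, ∀ y ∈ T, x < y) :
    InitSegSet (h ∪ q) (↑h ∪ T) ↔ InitSegSet q T := by
  have hqh : ∀ y ∈ q, y ∉ h := fun y hy hyh => lt_irrefl y (hq y hyh y hy)
  have hTh : ∀ y ∈ T, y ∉ h := fun y hy hyh => lt_irrefl y (hT y hyh y hy)
  constructor
  · rintro ⟨hsub, hlt⟩
    refine ⟨fun y hy => ?_, fun x hx y hy hyq => ?_⟩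
    · rcases hsub (Finset.mem_coe.2 (Finset.mem_union_right _ hy)) with hy' | hy'
      · exact absurd hy' (hqh y hy)
      · exact hy'
    · exact hlt x (Finset.mem_union_right _ hx) y (Or.inr hy)
        (by simp [hyq, hTh y hy])
  · rintro ⟨hsub, hlt⟩
    refine ⟨?_, fun x hx y hy hyq => ?_⟩
    · rw [Finset.coe_union]; exact union_subset_union_right _ hsub
    · have hyh : y ∉ h := fun hyh => hyq (Finset.mem_union_left _ hyh)
      have hyT : y ∈ T := hy.resolve_left hyh
      rcases Finset.mem_union.1 hx with hx | hx
      · exact hT x hx y hyT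
      · exact hlt x hx y hyT (fun hyq' => hyq (Finset.mem_union_right _ hyq'))

theorem initSegSet_insert_insert_iff {a : ℕ} {q : Finset ℕ} {T : Set ℕ}
    (hq : ∀ y ∈ q, a < y) (hT : ∀ y ∈ T, a < y) :
    InitSegSet (insert a q) (insert a T) ↔ InitSegSet q T := by
  rw [Finset.insert_eq, Set.insert_eq, ← Finset.coe_singleton]
  exact initSegSet_union_union_iff (by simpa using hq) (by simpa using hT)

theorem initSegSet_insert_iff {a : ℕ} {q : Finset ℕ} {W : Set ℕ} (hq : ∀ y ∈ q, a < y)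
    (hW : W.Nonempty) : InitSegSet (insert a q) W ↔ sInf W = a ∧ InitSegSet q (dropMin W) := by
  have key : ∀ {b}, sInf W = b → (InitSegSet (insert b q) W ↔ InitSegSet (insert b q)
      (insert b (dropMin W))) := fun hb => by rw [← hb, insert_sInf_dropMin hW]
  constructor
  · intro h
    have hmin : sInf W = a := by
      rcases Finset.mem_insert.1 (h.sInf_mem (Finset.insert_nonempty _ _)) with hm | hm
      · exact hm
      · exact absurd (Nat.sInf_le (h.1 (Finset.mem_insert_self a q))) (not_le.2 (hq _ hm))
    refine ⟨hmin, (initSegSet_insert_insert_iff hq fun y hy => ?_).1 ((key hmin).1 h)⟩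
    exact hmin ▸ sInf_lt_of_mem_dropMin hy
  · rintro ⟨hmin, h⟩
    refine (key hmin).2 ((initSegSet_insert_insert_iff hq fun y hy => ?_).2 h)
    exact hmin ▸ sInf_lt_of_mem_dropMin hy

theorem initSegSet_singleton_iff {a : ℕ} {W : Set ℕ} (hW : W.Nonempty) :
    InitSegSet {a} W ↔ sInf W = a := by
  rw [← Finset.insert_empty, initSegSet_insert_iff (by simp) hW]
  exact and_iff_left ⟨by simp, by simp⟩

/-! ### Galvin's lemma and Nash-Williams' theorem -/

theorem exists_seq_iUnion {α : Type*} (F : α → Finset ℕ) (a₀ : α)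
    (hstep : ∀ a, ∃ b, ∃ y, (∀ x ∈ F a, x < y) ∧ F b = insert y (F a)) :
    ∃ u : ℕ → α, (⋃ n, (F (u n) : Set ℕ)).Infinite ∧
      ∀ s : Finset ℕ, ↑s ⊆ ⋃ n, (F (u n) : Set ℕ) → ∃ n, s ⊆ F (u n) := by
  choose next y hy hF using hstep
  have hsucc : ∀ n, F (next^[n + 1] a₀) = insert (y (next^[n] a₀)) (F (next^[n] a₀)) :=
    fun n => by rw [Function.iterate_succ_apply', hF]
  have hmono : Monotone fun n => (F (next^[n] a₀) : Set ℕ) :=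
    monotone_nat_of_le_succ fun n => by rw [hsucc, Finset.coe_insert]; exact subset_insert _ _
  have hcard : ∀ n, n ≤ (F (next^[n] a₀)).card := by
    intro n
    induction n with
    | zero => exact Nat.zero_le _
    | succ n ih =>
      rw [hsucc, Finset.card_insert_of_notMem fun h => lt_irrefl _ (hy _ _ h)]
      omega
  refine ⟨fun n => next^[n] a₀, fun hfin => ?_, fun s hs => ?_⟩
  · obtain ⟨t, ht⟩ := hfin.exists_finset_coe
    have hsub : F (next^[t.card + 1] a₀) ⊆ t := fun x hx => by
      rw [← Finset.mem_coe, ht]; exact mem_iUnion.2 ⟨_, hx⟩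
    have := Finset.card_le_card hsub
    have := hcard (t.card + 1)
    omega
  · obtain ⟨n, hn⟩ := hmono.directed_le.exists_mem_subset_of_finset_subset_biUnion hs
    exact ⟨n, Finset.coe_subset.1 hn⟩

theorem exists_fusion {Q : ℕ → Set ℕ → Prop} (hQ : ∀ x M N, N ⊆ M → Q x M → Q x N)
    (hex : ∀ x, ∀ M : Set ℕ, M.Infinite → ∃ N ⊆ M, N.Infinite ∧ Q x N)
    {M : Set ℕ} (hM : M.Infinite) :
    ∃ X ⊆ M, X.Infinite ∧ ∀ x ∈ X, Q x {y ∈ X | x < y} := by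
  have hstep : ∀ N : {N : Set ℕ // N.Infinite}, ∃ N' : {N : Set ℕ // N.Infinite},
      N'.1 ⊆ {y ∈ N.1 | sInf N.1 < y} ∧ Q (sInf N.1) N'.1 := fun N => by
    obtain ⟨N', h1, h2, h3⟩ := hex (sInf N.1) _ (N.2.sdiff (finite_Iic (sInf N.1)))
    exact ⟨⟨N', h2⟩, fun y hy => ⟨(h1 hy).1, not_le.1 (h1 hy).2⟩, h3⟩
  choose next hnext using hstep
  set N : ℕ → Set ℕ := fun n => (next^[n] ⟨M, hM⟩).1
  have hNsucc : ∀ n, N (n + 1) ⊆ {y ∈ N n | sInf (N n) < y} ∧ Q (sInf (N n)) (N (n + 1)) :=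
    fun n => by simp only [N, Function.iterate_succ_apply']; exact hnext _
  have hN : Antitone N := antitone_nat_of_succ_le fun n y hy => ((hNsucc n).1 hy).1
  have hmem : ∀ n, sInf (N n) ∈ N n := fun n => Nat.sInf_mem (next^[n] ⟨M, hM⟩).2.nonempty
  have hx : StrictMono fun n => sInf (N n) :=
    strictMono_nat_of_lt_succ fun n => ((hNsucc n).1 (hmem (n + 1))).2
  refine ⟨range fun n => sInf (N n), ?_, infinite_range_of_injective hx.injective, ?_⟩
  · rintro _ ⟨n, rfl⟩
    exact hN (Nat.zero_le n) (hmem n)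
  · rintro _ ⟨k, rfl⟩
    refine hQ _ _ _ ?_ (hNsucc k).2
    rintro _ ⟨⟨j, rfl⟩, hj⟩
    exact hN (hx.lt_iff_lt.1 hj) (hmem j)

namespace Galvin

variable (S : Set (Finset ℕ))

def Accepts (s : Finset ℕ) (M : Set ℕ) : Prop :=
  ∀ Y ⊆ M, Y.Infinite → ∃ e, InitSegSet e Y ∧ s ∪ e ∈ S

def Rejects (s : Finset ℕ) (M : Set ℕ) : Prop :=
  ∀ N ⊆ M, N.Infinite → ¬ Accepts S s N

def above (X : Set ℕ) (s : Finset ℕ) : Set ℕ := {y ∈ X | ∀ a ∈ s, a < y}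

variable {S} {s : Finset ℕ} {M N : Set ℕ}

theorem infinite_above {X : Set ℕ} (hX : X.Infinite) (s : Finset ℕ) :
    (above X s).Infinite :=
  (hX.sdiff (finite_Iic (s.sup id))).mono fun _ hy =>
    ⟨hy.1, fun _ ha => (Finset.le_sup (f := id) ha).trans_lt (not_le.1 hy.2)⟩

theorem Accepts.mono (h : Accepts S s M) (hNM : N ⊆ M) : Accepts S s N :=
  fun Y hY => h Y (hY.trans hNM)

theorem Rejects.mono (h : Rejects S s M) (hNM : N ⊆ M) : Rejects S s N :=
  fun Y hY => h Y (hY.trans hNM)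

theorem exists_accepts_or_rejects (s : Finset ℕ) (hM : M.Infinite) :
    ∃ N ⊆ M, N.Infinite ∧ (Accepts S s N ∨ Rejects S s N) := by
  by_cases h : ∃ N ⊆ M, N.Infinite ∧ Accepts S s N
  · obtain ⟨N, h1, h2, h3⟩ := h
    exact ⟨N, h1, h2, Or.inl h3⟩
  · exact ⟨M, subset_rfl, hM, Or.inr fun N hNM hN hacc => h ⟨N, hNM, hN, hacc⟩⟩

theorem exists_accepts_or_rejects_finset (F : Finset (Finset ℕ)) (hM : M.Infinite) :
    ∃ N ⊆ M, N.Infinite ∧ ∀ s ∈ F, Accepts S s N ∨ Rejects S s N := by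
  classical
  induction F using Finset.induction generalizing M with
  | empty => exact ⟨M, subset_rfl, hM, by simp⟩
  | insert s F _ ih =>
    obtain ⟨N, hNM, hN, hs⟩ := exists_accepts_or_rejects (S := S) s hM
    obtain ⟨N', hN'N, hN', hF⟩ := ih hN
    refine ⟨N', hN'N.trans hNM, hN', (Finset.forall_mem_insert _ _ _).2 ⟨?_, hF⟩⟩
    exact hs.imp (·.mono hN'N) (·.mono hN'N)

theorem exists_accepts_or_rejects_above (hM : M.Infinite) :
    ∃ X ⊆ M, X.Infinite ∧ ∀ s : Finset ℕ, ↑s ⊆ X → s.Nonempty →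
      Accepts S s (above X s) ∨ Rejects S s (above X s) := by
  obtain ⟨X, hXM, hX, hdec⟩ := exists_fusion
    (Q := fun x N => ∀ s ∈ (Finset.range (x + 1)).powerset, Accepts S s N ∨ Rejects S s N)
    (fun x M N hNM h s hs => (h s hs).imp (·.mono hNM) (·.mono hNM))
    (fun x M hM => exists_accepts_or_rejects_finset _ hM) hM
  refine ⟨X, hXM, hX, fun s hsX hne => ?_⟩
  have habove : above X s = {y ∈ X | s.max' hne < y} := by
    ext y
    exact and_congr_right fun _ => ⟨fun h => h _ (s.max'_mem hne),
      fun h a ha => (s.le_max' a ha).trans_lt h⟩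
  rw [habove]
  refine hdec _ (hsX (s.max'_mem hne)) s (Finset.mem_powerset.2 fun a ha => ?_)
  exact Finset.mem_range.2 (Nat.lt_succ_of_le (s.le_max' a ha))

/-- Otherwise the accepted extension points would form an infinite set accepting `s`. -/
theorem Rejects.finite_accepts_insert {X : Set ℕ} (h : Rejects S s (above X s)) :
    {y ∈ above X s | Accepts S (insert y s) (above X (insert y s))}.Finite := by
  by_contra hinf
  refine h _ (fun y hy => hy.1) hinf fun Y hY hYinf => ?_
  have hy₀ := hY (Nat.sInf_mem hYinf.nonempty)
  have hgt : ∀ y ∈ dropMin Y, sInf Y < y := fun y hy => sInf_lt_of_mem_dropMin hy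
  have hsub : dropMin Y ⊆ above X (insert (sInf Y) s) := fun y hy =>
    ⟨(hY (dropMin_subset Y hy)).1.1, (Finset.forall_mem_insert _ _ _).2
      ⟨hgt y hy, (hY (dropMin_subset Y hy)).1.2⟩⟩
  obtain ⟨e, he, heS⟩ := hy₀.2 _ hsub hYinf.dropMin
  refine ⟨insert (sInf Y) e, ?_, ?_⟩
  · have h := (initSegSet_insert_insert_iff (fun y hy => hgt y (he.1 hy)) hgt).2 he
    rwa [insert_sInf_dropMin hYinf.nonempty] at h
  · rwa [Finset.union_insert, ← Finset.insert_union]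

theorem exists_insert_rejects {X : Set ℕ} (hX : X.Infinite)
    (hdec : ∀ s : Finset ℕ, ↑s ⊆ X → s.Nonempty →
      Accepts S s (above X s) ∨ Rejects S s (above X s))
    {G : Finset ℕ} (hGX : ↑G ⊆ X) (hGrej : ∀ t ⊆ G, Rejects S t (above X t)) :
    ∃ y ∈ X, (∀ x ∈ G, x < y) ∧ ∀ t ⊆ insert y G, Rejects S t (above X t) := by
  classical
  have hbad : (⋃ t ∈ G.powerset,
      {y ∈ above X t | Accepts S (insert y t) (above X (insert y t))}).Finite :=
    G.powerset.finite_toSet.biUnion fun t ht =>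
      (hGrej t (Finset.mem_powerset.1 ht)).finite_accepts_insert
  obtain ⟨y, ⟨hyX, hybad⟩, hyG⟩ := (hX.sdiff hbad).exists_gt (G.sup id)
  have hGy : ∀ x ∈ G, x < y := fun x hx => (Finset.le_sup (f := id) hx).trans_lt hyG
  refine ⟨y, hyX, hGy, fun t ht => ?_⟩
  by_cases hyt : y ∈ t
  · have ht' : t.erase y ⊆ G := fun a ha => (Finset.mem_insert.1
      (ht (Finset.mem_of_mem_erase ha))).resolve_left (Finset.ne_of_mem_erase ha)
    have htX : ↑t ⊆ X := fun a ha => (Finset.mem_insert.1 (ht ha)).elim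
      (fun h => h ▸ hyX) fun h => hGX h
    refine (hdec t htX ⟨y, hyt⟩).resolve_left fun hacc => hybad ?_
    refine mem_biUnion (Finset.mem_powerset.2 ht') ⟨⟨hyX, fun a ha => hGy a (ht' ha)⟩, ?_⟩
    rwa [Finset.insert_erase hyt]
  · exact hGrej t fun a ha => (Finset.mem_insert.1 (ht ha)).resolve_left fun h => hyt (h ▸ ha)

theorem exists_forall_rejects {X : Set ℕ} (hX : X.Infinite)
    (hdec : ∀ s : Finset ℕ, ↑s ⊆ X → s.Nonempty →
      Accepts S s (above X s) ∨ Rejects S s (above X s))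
    (hrej : Rejects S ∅ X) :
    ∃ Y ⊆ X, Y.Infinite ∧ ∀ s : Finset ℕ, ↑s ⊆ Y → Rejects S s (above X s) := by
  let Good : Finset ℕ → Prop := fun G => ↑G ⊆ X ∧ ∀ t ⊆ G, Rejects S t (above X t)
  have hstep : ∀ G : {G // Good G}, ∃ G' : {G // Good G}, ∃ y,
      (∀ x ∈ G.1, x < y) ∧ G'.1 = insert y G.1 := fun ⟨G, hGX, hGrej⟩ => by
    obtain ⟨y, hyX, hGy, hrej'⟩ := exists_insert_rejects hX hdec hGX hGrej
    exact ⟨⟨insert y G, Finset.coe_insert y G ▸ insert_subset hyX hGX, hrej'⟩, y, hGy, rfl⟩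
  have hGood₀ : Good ∅ := ⟨by simp, fun t ht => by
    rw [Finset.subset_empty.1 ht]; exact hrej.mono fun y hy => hy.1⟩
  obtain ⟨u, hinf, hsub⟩ := exists_seq_iUnion (fun G : {G // Good G} => G.1) ⟨∅, hGood₀⟩ hstep
  refine ⟨_, fun x hx => ?_, hinf, fun s hs => ?_⟩
  · obtain ⟨n, hn⟩ := mem_iUnion.1 hx
    exact (u n).2.1 hn
  · obtain ⟨n, hn⟩ := hsub s hs
    exact (u n).2.2 s hn

end Galvin

open Galvin in
theorem galvin (S : Set (Finset ℕ)) {M : Set ℕ} (hM : M.Infinite) :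
    ∃ X ⊆ M, X.Infinite ∧ ((∀ Y ⊆ X, Y.Infinite → ∃ e ∈ S, InitSegSet e Y) ∨
      ∀ s : Finset ℕ, ↑s ⊆ X → s ∉ S) := by
  obtain ⟨N, hNM, hN, hacc | hrej⟩ := exists_accepts_or_rejects (S := S) ∅ hM
  · refine ⟨N, hNM, hN, Or.inl fun Y hY hYinf => ?_⟩
    obtain ⟨e, he, heS⟩ := hacc Y hY hYinf
    exact ⟨e, by simpa using heS, he⟩
  obtain ⟨X, hXN, hX, hdec⟩ := exists_accepts_or_rejects_above hN
  obtain ⟨Y, hYX, hY, hYrej⟩ := exists_forall_rejects hX hdec (hrej.mono hXN)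
  refine ⟨Y, hYX.trans (hXN.trans hNM), hY, Or.inr fun s hs hsS => ?_⟩
  exact hYrej s hs _ subset_rfl (infinite_above hX s) fun _ _ _ =>
    ⟨∅, ⟨by simp, by simp⟩, by simpa using hsS⟩

def IsLocal {ι : Type*} (X : Set ℕ) (C : Set ℕ → ι) : Prop :=
  ∀ W ⊆ X, W.Infinite → ∃ p : Finset ℕ, InitSegSet p W ∧
    ∀ W' ⊆ X, W'.Infinite → InitSegSet p W' → C W' = C W

namespace IsLocal

variable {ι κ : Type*} {X Y : Set ℕ} {C : Set ℕ → ι}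

theorem mono (hC : IsLocal X C) (hYX : Y ⊆ X) : IsLocal Y C := fun W hW hWi => by
  obtain ⟨p, hp, hpC⟩ := hC W (hW.trans hYX) hWi
  exact ⟨p, hp, fun W' hW' => hpC W' (hW'.trans hYX)⟩

theorem comp (hC : IsLocal X C) (g : ι → κ) : IsLocal X (g ∘ C) := fun W hW hWi => by
  obtain ⟨p, hp, hpC⟩ := hC W hW hWi
  exact ⟨p, hp, fun W' hW' hW'i hpW' => congrArg g (hpC W' hW' hW'i hpW')⟩

theorem prodMk {D : Set ℕ → κ} (hC : IsLocal X C) (hD : IsLocal X D) :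
    IsLocal X fun W => (C W, D W) := fun W hW hWi => by
  obtain ⟨p, hp, hpC⟩ := hC W hW hWi
  obtain ⟨q, hq, hqD⟩ := hD W hW hWi
  rcases hp.subset_or_subset hq with hpq | hqp
  · exact ⟨q, hq, fun W' hW' hW'i hqW' =>
      Prod.ext (hpC W' hW' hW'i (hp.of_subset hq hpq hqW')) (hqD W' hW' hW'i hqW')⟩
  · exact ⟨p, hp, fun W' hW' hW'i hpW' =>
      Prod.ext (hpC W' hW' hW'i hpW') (hqD W' hW' hW'i (hq.of_subset hp hqp hpW'))⟩

theorem comp_dropMin (hC : IsLocal X C) : IsLocal X (C ∘ dropMin) := fun W hW hWi => by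
  obtain ⟨q, hq, hqC⟩ := hC _ ((dropMin_subset W).trans hW) hWi.dropMin
  have hq' : ∀ y ∈ q, sInf W < y := fun y hy => sInf_lt_of_mem_dropMin (hq.1 hy)
  refine ⟨insert (sInf W) q, (initSegSet_insert_iff hq' hWi.nonempty).2 ⟨rfl, hq⟩,
    fun W' hW' hW'i hW'q => ?_⟩
  exact hqC _ ((dropMin_subset W').trans hW') hW'i.dropMin
    ((initSegSet_insert_iff hq' hW'i.nonempty).1 hW'q).2

/-- Nash-Williams' partition theorem for clopen colourings. -/
theorem exists_const (hC : IsLocal X C) (hX : X.Infinite) {V : Set ι} (hV : V.Finite)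
    (hCV : ∀ W ⊆ X, W.Infinite → C W ∈ V) :
    ∃ Y ⊆ X, Y.Infinite ∧ ∃ i, ∀ W ⊆ Y, W.Infinite → C W = i := by
  induction V, hV using Set.Finite.induction_on generalizing X with
  | empty => exact absurd (hCV X subset_rfl hX) (notMem_empty _)
  | @insert i V _ _ ih =>
    obtain ⟨Y, hYX, hY, hall | hnone⟩ := galvin {p | ↑p ⊆ X ∧
      ∀ W' ⊆ X, W'.Infinite → InitSegSet p W' → C W' = i} hX
    · refine ⟨Y, hYX, hY, i, fun W hW hWi => ?_⟩
      obtain ⟨e, ⟨-, he⟩, heW⟩ := hall W hW hWi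
      exact he W (hW.trans hYX) hWi heW
    · obtain ⟨Z, hZY, hZ, j, hj⟩ := ih (hC.mono hYX) hY fun W hW hWi => by
        refine (hCV W (hW.trans hYX) hWi).resolve_left fun hCi => ?_
        obtain ⟨p, hp, hpC⟩ := hC W (hW.trans hYX) hWi
        exact hnone p (hp.1.trans hW) ⟨hp.1.trans (hW.trans hYX),
          fun W' hW' hW'i hpW' => (hpC W' hW' hW'i hpW').trans hCi⟩
      exact ⟨Z, hZY.trans hYX, hZ, j, hj⟩

end IsLocal

/-! ### Levels -/

/-- A bad map `f` on a barrier `B`, seen on infinite sets: `σ W` is the member of `B` that is an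
initial segment of `W` and `v W = f (σ W)`. -/
structure Level (P : Type*) [LE P] (v : Set ℕ → P) where
  X : Set ℕ
  infinite : X.Infinite
  σ : Set ℕ → Finset ℕ
  nonempty : ∀ W ⊆ X, W.Infinite → (σ W).Nonempty
  initSeg : ∀ W ⊆ X, W.Infinite → InitSegSet (σ W) W
  eq_of_initSeg : ∀ W ⊆ X, W.Infinite → ∀ W' ⊆ X, W'.Infinite →
    InitSegSet (σ W) W' → σ W' = σ W ∧ v W' = v W
  antichain : ∀ W ⊆ X, W.Infinite → ∀ W' ⊆ X, W'.Infinite → σ W ⊆ σ W' → σ W = σ W'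
  bad : ∀ W ⊆ X, W.Infinite → ¬ v W ≤ v (dropMin W)

namespace Level

variable {P : Type*} [PartialOrder P] {v : Set ℕ → P}

section

variable (L : Level P v)

def restrict (Y : Set ℕ) (hY : Y ⊆ L.X) (hYi : Y.Infinite) : Level P v where
  X := Y
  infinite := hYi
  σ := L.σ
  nonempty W hW := L.nonempty W (hW.trans hY)
  initSeg W hW := L.initSeg W (hW.trans hY)
  eq_of_initSeg W hW hWi W' hW' := L.eq_of_initSeg W (hW.trans hY) hWi W' (hW'.trans hY)
  antichain W hW hWi W' hW' := L.antichain W (hW.trans hY) hWi W' (hW'.trans hY)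
  bad W hW := L.bad W (hW.trans hY)

theorem isLocal : IsLocal L.X v := fun W hW hWi =>
  ⟨L.σ W, L.initSeg W hW hWi, fun W' hW' hW'i h => (L.eq_of_initSeg W hW hWi W' hW' hW'i h).2⟩

noncomputable def head (W : Set ℕ) : Finset ℕ := (L.σ W).erase (sInf W)

variable {L} {W : Set ℕ}

theorem insert_head (hW : W ⊆ L.X) (hWi : W.Infinite) :
    insert (sInf W) (L.head W) = L.σ W :=
  Finset.insert_erase ((L.initSeg W hW hWi).sInf_mem (L.nonempty W hW hWi))

theorem sInf_lt_of_mem_head (hW : W ⊆ L.X) (hWi : W.Infinite) {x : ℕ} (hx : x ∈ L.head W) :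
    sInf W < x :=
  lt_of_le_of_ne (Nat.sInf_le ((L.initSeg W hW hWi).1 (Finset.mem_of_mem_erase hx)))
    (Finset.ne_of_mem_erase hx).symm

theorem initSegSet_iff_head (hW : W ⊆ L.X) (hWi : W.Infinite) {W' : Set ℕ}
    (hW' : W'.Nonempty) :
    InitSegSet (L.σ W) W' ↔ sInf W' = sInf W ∧ InitSegSet (L.head W) (dropMin W') := by
  rw [← insert_head hW hWi]
  exact initSegSet_insert_iff (fun _ => sInf_lt_of_mem_head hW hWi) hW'

theorem head_initSeg (hW : W ⊆ L.X) (hWi : W.Infinite) :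
    InitSegSet (L.head W) (dropMin W) :=
  ((initSegSet_iff_head hW hWi hWi.nonempty).1 (L.initSeg W hW hWi)).2

theorem head_ssubset (hW : W ⊆ L.X) (hWi : W.Infinite) {G : Set ℕ} (hG : G ⊆ L.X)
    (hGi : G.Infinite) (hhG : InitSegSet (L.head W) G) (hmG : sInf W ∉ G) :
    L.head W ⊂ L.σ G := by
  have hσG : ¬ L.σ G ⊆ L.σ W := fun hsub => hmG <| (L.initSeg G hG hGi).1 <| by
    rw [L.antichain G hG hGi W hW hWi hsub, Finset.mem_coe]
    exact (L.initSeg W hW hWi).sInf_mem (L.nonempty W hW hWi)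
  rcases hhG.subset_or_subset (L.initSeg G hG hGi) with hsub | hsub
  · exact Finset.ssubset_iff_subset_ne.2 ⟨hsub, fun heq =>
      hσG (heq ▸ Finset.erase_subset _ _)⟩
  · exact absurd (hsub.trans (Finset.erase_subset _ _)) hσG

theorem finite_setOf_σ_eq_singleton [WellQuasiOrderedLE P] (L : Level P v) :
    {x | ∃ W ⊆ L.X, W.Infinite ∧ L.σ W = {x}}.Finite := by
  set Sing := {x | ∃ W ⊆ L.X, W.Infinite ∧ L.σ W = {x}}
  by_contra hinf
  rw [← Set.Infinite] at hinf
  choose! w hwX hwi hwσ using fun x (hx : x ∈ Sing) => hx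
  have hSingX : Sing ⊆ L.X := fun x hx =>
    hwX x hx ((L.initSeg _ (hwX x hx) (hwi x hx)).1 (by simp [hwσ x hx]))
  have hval : ∀ x ∈ Sing, ∀ G ⊆ L.X, G.Infinite → sInf G = x → v G = v (w x) :=
    fun x hx G hG hGi hGx => (L.eq_of_initSeg _ (hwX x hx) (hwi x hx) G hG hGi
      (by rw [hwσ x hx, initSegSet_singleton_iff hGi.nonempty, hGx])).2
  obtain ⟨x, hx, y, hy, hxy, hle⟩ := hinf.exists_lt_le fun x => v (w x)
  set G := {z ∈ Sing | y ≤ z}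
  have hG : G ⊆ L.X := fun z hz => hSingX hz.1
  have hGi : G.Infinite := (hinf.sdiff (finite_Iio y)).mono fun z hz => ⟨hz.1, not_lt.1 hz.2⟩
  have hxG : ∀ z ∈ G, x < z := fun z hz => hxy.trans_le hz.2
  have hxGX : insert x G ⊆ L.X := insert_subset (hSingX hx) hG
  refine L.bad _ hxGX (hGi.mono (subset_insert _ _)) ?_
  rw [dropMin_insert hxG, hval x hx _ hxGX (hGi.mono (subset_insert _ _)) (sInf_insert_of_lt hxG),
    hval y hy G hG hGi (IsLeast.csInf_eq ⟨⟨hy, le_rfl⟩, fun z hz => hz.2⟩)]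
  exact hle

theorem exists_restrict_head_nonempty [WellQuasiOrderedLE P] (L : Level P v) :
    ∃ Y ⊆ L.X, Y.Infinite ∧ ∀ W ⊆ Y, W.Infinite → (L.head W).Nonempty := by
  refine ⟨L.X \ {x | ∃ W ⊆ L.X, W.Infinite ∧ L.σ W = {x}}, sdiff_subset,
    L.infinite.sdiff L.finite_setOf_σ_eq_singleton, fun W hW hWi => ?_⟩
  rw [Finset.nonempty_iff_ne_empty]
  intro hempty
  have hWX : W ⊆ L.X := hW.trans sdiff_subset
  refine (hW (Nat.sInf_mem hWi.nonempty)).2 ⟨W, hWX, hWi, ?_⟩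
  rw [← insert_head hWX hWi, hempty, Finset.insert_empty]

end

theorem exists_restrict_pattern (L : Level P v) (hfin : (nonPrincipalIdeals P).Finite) :
    ∃ Y ⊆ L.X, Y.Infinite ∧ ∃ A : Set (Set P),
      ∀ W ⊆ Y, W.Infinite → {I ∈ nonPrincipalIdeals P | v W ∈ I} = A :=
  (L.isLocal.comp fun p => {I ∈ nonPrincipalIdeals P | p ∈ I}).exists_const L.infinite
    hfin.finite_subsets fun _ _ _ => sep_subset _ _

/-! ### Tails and combs -/

section

variable (L : Level P v)

noncomputable def skipBlock (h : Finset ℕ) (T : Set ℕ) : Set ℕ := T \ ↑(L.σ (↑h ∪ T))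

noncomputable def dropBlock (W : Set ℕ) : Set ℕ :=
  ↑(L.head W) ∪ (dropMin W \ ↑(L.σ (dropMin W)))

/-- `T` may follow the head of `W₀`: then `insert (sInf W₀) (head W₀ ∪ T)` begins with `σ W₀`. -/
structure IsTail (W₀ T : Set ℕ) : Prop where
  base_subset : W₀ ⊆ L.X
  base_infinite : W₀.Infinite
  subset : T ⊆ L.X
  infinite : T.Infinite
  sInf_lt : ∀ y ∈ T, sInf W₀ < y
  head_lt : ∀ x ∈ L.head W₀, ∀ y ∈ T, x < y

namespace IsTail

variable {L} {W₀ T : Set ℕ} (hT : L.IsTail W₀ T)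
include hT

theorem union_subset : ↑(L.head W₀) ∪ T ⊆ L.X :=
  Set.union_subset (fun _ hx => hT.base_subset ((L.initSeg W₀ hT.base_subset hT.base_infinite).1
    (Finset.mem_of_mem_erase (Finset.mem_coe.1 hx)))) hT.subset

theorem union_infinite : (↑(L.head W₀) ∪ T).Infinite :=
  hT.infinite.mono subset_union_right

theorem sInf_lt_of_mem_union : ∀ y ∈ ↑(L.head W₀) ∪ T, sInf W₀ < y := by
  rintro y (hy | hy)
  exacts [sInf_lt_of_mem_head hT.base_subset hT.base_infinite hy, hT.sInf_lt y hy]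

theorem insert_subset : insert (sInf W₀) (↑(L.head W₀) ∪ T) ⊆ L.X :=
  Set.insert_subset (hT.base_subset (Nat.sInf_mem hT.base_infinite.nonempty)) hT.union_subset

theorem insert_infinite : (insert (sInf W₀) (↑(L.head W₀) ∪ T)).Infinite :=
  hT.union_infinite.mono (subset_insert _ _)

theorem head_initSeg : InitSegSet (L.head W₀) (↑(L.head W₀) ∪ T) :=
  initSegSet_union hT.head_lt

theorem eq_insert :
    L.σ (insert (sInf W₀) (↑(L.head W₀) ∪ T)) = L.σ W₀ ∧
      v (insert (sInf W₀) (↑(L.head W₀) ∪ T)) = v W₀ := by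
  refine L.eq_of_initSeg W₀ hT.base_subset hT.base_infinite _ hT.insert_subset
    hT.insert_infinite ?_
  rw [initSegSet_iff_head hT.base_subset hT.base_infinite (insert_nonempty _ _),
    sInf_insert_of_lt hT.sInf_lt_of_mem_union, dropMin_insert hT.sInf_lt_of_mem_union]
  exact ⟨rfl, hT.head_initSeg⟩

theorem bad : ¬ v W₀ ≤ v (↑(L.head W₀) ∪ T) := by
  have h := L.bad _ hT.insert_subset hT.insert_infinite
  rwa [hT.eq_insert.2, dropMin_insert hT.sInf_lt_of_mem_union] at h

theorem head_ssubset : L.head W₀ ⊂ L.σ (↑(L.head W₀) ∪ T) :=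
  Level.head_ssubset hT.base_subset hT.base_infinite hT.union_subset hT.union_infinite
    hT.head_initSeg fun hm => lt_irrefl _ (hT.sInf_lt_of_mem_union _ hm)

theorem lt_of_mem_skipBlock {x y : ℕ} (hx : x ∈ L.σ (↑(L.head W₀) ∪ T))
    (hy : y ∈ L.skipBlock (L.head W₀) T) : x < y :=
  (L.initSeg _ hT.union_subset hT.union_infinite).2 x hx y (Or.inr hy.1) hy.2

theorem skipBlock : L.IsTail W₀ (L.skipBlock (L.head W₀) T) :=
  ⟨hT.base_subset, hT.base_infinite, sdiff_subset.trans hT.subset,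
    hT.infinite.sdiff (Finset.finite_toSet _), fun y hy => hT.sInf_lt y hy.1,
    fun x hx y hy => hT.head_lt x hx y hy.1⟩

theorem sInf_lt_sInf_skipBlock : sInf T < sInf (L.skipBlock (L.head W₀) T) := by
  obtain ⟨e, heσ, heh⟩ := Finset.exists_of_ssubset hT.head_ssubset
  have heT : e ∈ T :=
    ((L.initSeg _ hT.union_subset hT.union_infinite).1 heσ).resolve_left heh
  exact (Nat.sInf_le heT).trans_lt
    (hT.lt_of_mem_skipBlock heσ (Nat.sInf_mem hT.skipBlock.infinite.nonempty))

theorem dropBlock_insert :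
    L.dropBlock (insert (sInf W₀) (↑(L.head W₀) ∪ T)) =
      ↑(L.head W₀) ∪ L.skipBlock (L.head W₀) T := by
  have hhead : L.head (insert (sInf W₀) (↑(L.head W₀) ∪ T)) = L.head W₀ := by
    rw [head, hT.eq_insert.1, sInf_insert_of_lt hT.sInf_lt_of_mem_union]; rfl
  have hsub : (↑(L.head W₀) : Set ℕ) ⊆ ↑(L.σ (↑(L.head W₀) ∪ T)) :=
    Finset.coe_subset.2 hT.head_ssubset.subset
  rw [dropBlock, hhead, dropMin_insert hT.sInf_lt_of_mem_union, Level.skipBlock,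
    union_sdiff_distrib, sdiff_eq_empty.2 hsub, empty_union]

theorem iterate_skipBlock (n : ℕ) : L.IsTail W₀ ((L.skipBlock (L.head W₀))^[n] T) := by
  induction n with
  | zero => exact hT
  | succ n ih => rw [Function.iterate_succ_apply']; exact ih.skipBlock

theorem exists_iterate_skipBlock_gt (N : ℕ) :
    ∃ n, ∀ y ∈ (L.skipBlock (L.head W₀))^[n] T, N < y := by
  have hle : ∀ n, n ≤ sInf ((L.skipBlock (L.head W₀))^[n] T) := by
    intro n
    induction n with
    | zero => exact Nat.zero_le _
    | succ n ih =>
      rw [Function.iterate_succ_apply']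
      exact ih.trans_lt (hT.iterate_skipBlock n).sInf_lt_sInf_skipBlock
  exact ⟨N + 1, fun y hy => (hle (N + 1)).trans (Nat.sInf_le hy)⟩

/-- Splicing the first block of `T` in front of a later tail `T'`. -/
theorem exists_splice {T' : Set ℕ} (hT' : L.IsTail W₀ T')
    (hlt : ∀ x ∈ L.σ (↑(L.head W₀) ∪ T), ∀ y ∈ T', x < y) :
    ∃ T'', L.IsTail W₀ T'' ∧ v (↑(L.head W₀) ∪ T'') = v (↑(L.head W₀) ∪ T) ∧
      L.skipBlock (L.head W₀) T'' = T' := by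
  set h := L.head W₀
  set E := L.σ (↑h ∪ T)
  have hE := L.initSeg _ hT.union_subset hT.union_infinite
  have hET : ∀ y ∈ E \ h, y ∈ T := fun y hy =>
    (hE.1 (Finset.mem_sdiff.1 hy).1).resolve_left (Finset.mem_sdiff.1 hy).2
  have hunion : ↑h ∪ (↑(E \ h) ∪ T') = ↑E ∪ T' := by
    rw [← union_assoc, Finset.coe_sdiff,
      union_sdiff_cancel (Finset.coe_subset.2 hT.head_ssubset.subset)]
  have heq := L.eq_of_initSeg _ hT.union_subset hT.union_infinite (↑E ∪ T')
    (Set.union_subset (hE.1.trans hT.union_subset) hT'.subset)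
    (hT'.infinite.mono subset_union_right) (initSegSet_union hlt)
  refine ⟨↑(E \ h) ∪ T', ⟨hT.base_subset, hT.base_infinite,
    Set.union_subset (fun y hy => hT.subset (hET y hy)) hT'.subset,
    hT'.infinite.mono subset_union_right, ?_, ?_⟩, by rw [hunion]; exact heq.2, ?_⟩
  · rintro y (hy | hy)
    exacts [hT.sInf_lt y (hET y hy), hT'.sInf_lt y hy]
  · rintro x hx y (hy | hy)
    exacts [hT.head_lt x hx y (hET y hy), hT'.head_lt x hx y hy]
  · rw [Level.skipBlock, hunion, heq.1]
    ext y
    simp only [mem_sdiff, mem_union, Finset.coe_sdiff, Finset.mem_coe]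
    exact ⟨fun ⟨hy, hyE⟩ => hy.resolve_left fun h' => hyE h'.1,
      fun hy => ⟨Or.inr hy, fun hyE => lt_irrefl y (hlt y hyE y hy)⟩⟩

end IsTail

theorem skipBlock_subset (h : Finset ℕ) (T : Set ℕ) : L.skipBlock h T ⊆ T := sdiff_subset

theorem iterate_skipBlock_antitone (h : Finset ℕ) (T : Set ℕ) :
    Antitone fun n => (L.skipBlock h)^[n] T :=
  antitone_nat_of_succ_le fun n => by
    rw [Function.iterate_succ_apply']; exact L.skipBlock_subset h _

variable {L}

theorem dropBlock_subset {W : Set ℕ} (hW : W ⊆ L.X) (hWi : W.Infinite) :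
    L.dropBlock W ⊆ W :=
  Set.union_subset (fun _ hx => (L.initSeg W hW hWi).1 (Finset.mem_of_mem_erase hx))
    (sdiff_subset.trans (dropMin_subset W))

theorem dropBlock_infinite {W : Set ℕ} (hWi : W.Infinite) : (L.dropBlock W).Infinite :=
  (hWi.dropMin.sdiff (Finset.finite_toSet _)).mono subset_union_right

theorem head_subset_σ_dropMin {W : Set ℕ} (hW : W ⊆ L.X) (hWi : W.Infinite) :
    L.head W ⊆ L.σ (dropMin W) :=
  (head_ssubset hW hWi ((dropMin_subset W).trans hW) hWi.dropMin (head_initSeg hW hWi)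
    fun hm => lt_irrefl _ (sInf_lt_of_mem_dropMin hm)).subset

theorem head_subset_σ_dropBlock {W : Set ℕ} (hW : W ⊆ L.X) (hWi : W.Infinite) :
    L.head W ⊆ L.σ (L.dropBlock W) := by
  have ht := L.initSeg _ ((dropMin_subset W).trans hW) hWi.dropMin
  refine (head_ssubset hW hWi ((L.dropBlock_subset hW hWi).trans hW) (L.dropBlock_infinite hWi)
    (initSegSet_union fun x hx y hy => ht.lt_of_mem_sdiff (head_subset_σ_dropMin hW hWi hx) hy)
    fun hm => hm.elim (fun hm => lt_irrefl _ (sInf_lt_of_mem_head hW hWi hm))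
      fun hm => lt_irrefl _ (sInf_lt_of_mem_dropMin hm.1)).subset

theorem initSegSet_σ_dropBlock_sdiff_head {W : Set ℕ} (hW : W ⊆ L.X) (hWi : W.Infinite) :
    InitSegSet (L.σ (L.dropBlock W) \ L.head W) (dropMin W \ ↑(L.σ (dropMin W))) := by
  have ht := L.initSeg _ ((dropMin_subset W).trans hW) hWi.dropMin
  have hF := L.initSeg _ ((L.dropBlock_subset hW hWi).trans hW) (L.dropBlock_infinite hWi)
  have hhlt : ∀ x ∈ L.head W, ∀ y ∈ dropMin W \ ↑(L.σ (dropMin W)), x < y :=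
    fun x hx y hy => ht.lt_of_mem_sdiff (head_subset_σ_dropMin hW hWi hx) hy
  rw [← Finset.union_sdiff_of_subset (head_subset_σ_dropBlock hW hWi)] at hF
  refine (initSegSet_union_union_iff (fun x hx y hy => hhlt x hx y ?_) hhlt).1 hF
  exact (hF.1 (Finset.mem_union_right _ hy)).resolve_left (Finset.mem_sdiff.1 hy).2

/-- `dropBlock W` is determined by `σ W`, `σ (dropMin W)` and `σ (dropBlock W)`, which together
form an initial segment of `W`. -/
theorem isLocal_dropBlock : IsLocal L.X (v ∘ L.dropBlock) := fun W hW hWi => by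
  set h := L.head W
  set t := L.σ (dropMin W)
  set F := L.σ (L.dropBlock W)
  have hD : dropMin W ⊆ L.X := (dropMin_subset W).trans hW
  have ht : InitSegSet t (dropMin W) := L.initSeg _ hD hWi.dropMin
  have hht : h ⊆ t := head_subset_σ_dropMin hW hWi
  have hFh : InitSegSet (F \ h) (dropMin W \ ↑t) := initSegSet_σ_dropBlock_sdiff_head hW hWi
  have hFsplit : h ∪ (F \ h) = F := Finset.union_sdiff_of_subset (head_subset_σ_dropBlock hW hWi)
  have htF : ∀ x ∈ t, ∀ y ∈ F \ h, x < y := fun x hx y hy => ht.lt_of_mem_sdiff hx (hFh.1 hy)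
  have hq : InitSegSet (t ∪ (F \ h)) (dropMin W) := by
    have h' := (initSegSet_union_union_iff htF fun x hx y hy => ht.lt_of_mem_sdiff hx hy).2 hFh
    rwa [ht.union_sdiff] at h'
  have hmq : ∀ y ∈ t ∪ (F \ h), sInf W < y := fun y hy => sInf_lt_of_mem_dropMin (hq.1 hy)
  have hp := (initSegSet_insert_iff hmq hWi.nonempty).2 ⟨rfl, hq⟩
  refine ⟨_, hp, fun W' hW' hW'i hp' => ?_⟩
  obtain ⟨hmin, hq'⟩ := (initSegSet_insert_iff hmq hW'i.nonempty).1 hp'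
  have ht' : InitSegSet t (dropMin W') := ht.of_subset hq Finset.subset_union_left hq'
  have hσD' : L.σ (dropMin W') = t := (L.eq_of_initSeg _ hD hWi.dropMin _
    ((dropMin_subset W').trans hW') hW'i.dropMin ht').1
  have hσW : L.σ W ⊆ insert (sInf W) (t ∪ (F \ h)) := by
    rw [← insert_head hW hWi]
    exact Finset.insert_subset_insert _ (hht.trans Finset.subset_union_left)
  have hhead : L.head W' = h := by
    rw [head, (L.eq_of_initSeg W hW hWi W' hW' hW'i
      ((L.initSeg W hW hWi).of_subset hp hσW hp')).1, hmin]
    rfl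
  have ht'lt : ∀ x ∈ t, ∀ y ∈ dropMin W' \ ↑t, x < y := fun x hx y hy =>
    ht'.lt_of_mem_sdiff hx hy
  have hF' : InitSegSet F (L.dropBlock W') := by
    rw [← ht'.union_sdiff] at hq'
    rw [dropBlock, hhead, hσD', ← hFsplit]
    exact (initSegSet_union_union_iff (fun x hx y hy => htF x (hht hx) y hy)
      fun x hx y hy => ht'lt x (hht hx) y hy).2 ((initSegSet_union_union_iff htF ht'lt).1 hq')
  exact (L.eq_of_initSeg _ ((L.dropBlock_subset hW hWi).trans hW) (L.dropBlock_infinite hWi) _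
    ((L.dropBlock_subset hW' hW'i).trans hW') (L.dropBlock_infinite hW'i) hF').2

theorem isTail_of_initSeg {W₀ W : Set ℕ} (hW₀ : W₀ ⊆ L.X) (hW₀i : W₀.Infinite) (hW : W ⊆ L.X)
    (hWi : W.Infinite) (hlt : ∀ y ∈ W, sInf W₀ < y) (hh : InitSegSet (L.head W₀) W) :
    L.IsTail W₀ (W \ ↑(L.head W₀)) :=
  ⟨hW₀, hW₀i, sdiff_subset.trans hW, hWi.sdiff (Finset.finite_toSet _),
    fun y hy => hlt y hy.1, fun _ hx _ hy => hh.lt_of_mem_sdiff hx hy⟩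

theorem isTail_dropMin_sdiff_head {W : Set ℕ} (hW : W ⊆ L.X) (hWi : W.Infinite) :
    L.IsTail W (dropMin W \ ↑(L.head W)) :=
  isTail_of_initSeg hW hWi ((dropMin_subset _).trans hW) hWi.dropMin
    (fun _ => sInf_lt_of_mem_dropMin) (head_initSeg hW hWi)

theorem exists_restrict_rel_const (L : Level P v) :
    ∃ Y ⊆ L.X, Y.Infinite ∧ ∃ d : Prop × Prop, ∀ V ⊆ Y, V.Infinite →
      (v (dropMin V) ≤ v (L.dropBlock V), v (L.dropBlock V) ≤ v (dropMin V)) = d :=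
  ((L.isLocal.comp_dropMin.prodMk isLocal_dropBlock).comp
    fun p : P × P => (p.1 ≤ p.2, p.2 ≤ p.1)).exists_const L.infinite finite_univ
    fun _ _ _ => mem_univ _

section Comb

variable {W₀ T : Set ℕ} {d : Prop × Prop}
  (hC : ∀ V ⊆ L.X, V.Infinite → (v (dropMin V) ≤ v (L.dropBlock V),
    v (L.dropBlock V) ≤ v (dropMin V)) = d)
include hC

theorem IsTail.rel_iterate_skipBlock (hT : L.IsTail W₀ T) {k l : ℕ} (hkl : k < l) :
    let u := fun n => v (↑(L.head W₀) ∪ (L.skipBlock (L.head W₀))^[n] T)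
    (u k ≤ u l ↔ d.1) ∧ (u l ≤ u k ↔ d.2) := by
  intro u
  have hk := hT.iterate_skipBlock k
  obtain ⟨T'', hT'', hv, hskip⟩ := hk.exists_splice (hT.iterate_skipBlock l) fun x hx y hy => by
    refine hk.lt_of_mem_skipBlock hx ?_
    rw [← Function.iterate_succ_apply' (L.skipBlock (L.head W₀))]
    exact L.iterate_skipBlock_antitone _ _ hkl hy
  have h := hC _ hT''.insert_subset hT''.insert_infinite
  rw [dropMin_insert hT''.sInf_lt_of_mem_union, hT''.dropBlock_insert, hskip, hv] at h
  rw [← h]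
  exact ⟨Iff.rfl, Iff.rfl⟩

/-- Along the comb `dropMin L.X`, `skipBlock` of it, ..., the values form a bad sequence unless
`d.1` holds. -/
theorem rel_const_fst [WellQuasiOrderedLE P] : d.1 := by
  have hT := isTail_dropMin_sdiff_head subset_rfl L.infinite
  obtain ⟨k, l, hkl, hle⟩ := wellQuasiOrdered_le
    fun n => v (↑(L.head L.X) ∪ (L.skipBlock (L.head L.X))^[n] (dropMin L.X \ ↑(L.head L.X)))
  exact ((hT.rel_iterate_skipBlock hC hkl).1).1 hle

/-- Otherwise the values along the comb increase strictly; the ideal they generate then contains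
`v L.X`, since on `L.X` the values lie in the same non-principal ideals. -/
theorem rel_const_snd {A : Set (Set P)}
    (hA : ∀ W ⊆ L.X, W.Infinite → {I ∈ nonPrincipalIdeals P | v W ∈ I} = A) (hd : d.1) :
    d.2 := by
  by_contra hd₂
  have hT := isTail_dropMin_sdiff_head subset_rfl L.infinite
  set u := fun n => v (↑(L.head L.X) ∪ (L.skipBlock (L.head L.X))^[n] (dropMin L.X \ ↑(L.head L.X)))
  have hu : StrictMono u := strictMono_nat_of_lt_succ fun n =>
    lt_of_le_not_ge ((hT.rel_iterate_skipBlock hC n.lt_succ_self).1.2 hd)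
      fun h => hd₂ ((hT.rel_iterate_skipBlock hC n.lt_succ_self).2.1 h)
  have hu₀ : u 0 = v (dropMin L.X) :=
    congrArg v (head_initSeg subset_rfl L.infinite).union_sdiff
  have hJ : {p | ∃ n, p ≤ u n} ∈ {I ∈ nonPrincipalIdeals P | v L.X ∈ I} := by
    rw [hA L.X subset_rfl L.infinite, ← hA _ (dropMin_subset _) L.infinite.dropMin, ← hu₀]
    exact ⟨hu.setOf_le_mem_nonPrincipalIdeals, 0, le_rfl⟩
  obtain ⟨n, hn⟩ := hJ.2
  exact (hT.iterate_skipBlock n).bad hn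

end Comb

section TailIndependence

variable {W₀ T : Set ℕ}
  (hEQ : ∀ V ⊆ L.X, V.Infinite → v (dropMin V) = v (L.dropBlock V))
include hEQ

theorem IsTail.v_union_skipBlock (hT : L.IsTail W₀ T) :
    v (↑(L.head W₀) ∪ L.skipBlock (L.head W₀) T) = v (↑(L.head W₀) ∪ T) := by
  have h := hEQ _ hT.insert_subset hT.insert_infinite
  rw [dropMin_insert hT.sInf_lt_of_mem_union, hT.dropBlock_insert] at h
  exact h.symm

theorem IsTail.v_union_eq (hT : L.IsTail W₀ T) {T' : Set ℕ}
    (hT' : L.IsTail W₀ T') : v (↑(L.head W₀) ∪ T) = v (↑(L.head W₀) ∪ T') := by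
  obtain ⟨n, hn⟩ := hT.exists_iterate_skipBlock_gt ((L.σ (↑(L.head W₀) ∪ T')).sup id)
  obtain ⟨T'', hT'', hv, hskip⟩ := hT'.exists_splice (hT.iterate_skipBlock n)
    fun x hx y hy => (Finset.le_sup (f := id) hx).trans_lt (hn y hy)
  have hiter : ∀ n, v (↑(L.head W₀) ∪ (L.skipBlock (L.head W₀))^[n] T) =
      v (↑(L.head W₀) ∪ T) := by
    intro n
    induction n with
    | zero => rfl
    | succ n ih =>
      rw [Function.iterate_succ_apply', (hT.iterate_skipBlock n).v_union_skipBlock hEQ, ih]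
  rw [← hv, ← hT''.v_union_skipBlock hEQ, hskip, hiter]

end TailIndependence

end

/-! ### Derived levels -/

section Derived

variable {L : Level P v} {W W' : Set ℕ}

theorem insert_sInf_infinite (hWi : W.Infinite) : (insert (sInf L.X) W).Infinite :=
  hWi.mono (subset_insert _ _)

variable (hW : W ⊆ dropMin L.X)
include hW

theorem sInf_lt_of_subset_dropMin : ∀ y ∈ W, sInf L.X < y :=
  fun _ hy => sInf_lt_of_mem_dropMin (hW hy)

theorem insert_sInf_subset : insert (sInf L.X) W ⊆ L.X :=
  Set.insert_subset (Nat.sInf_mem L.infinite.nonempty) (hW.trans (dropMin_subset _))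

theorem head_insert_sInf :
    L.head (insert (sInf L.X) W) = (L.σ (insert (sInf L.X) W)).erase (sInf L.X) := by
  rw [head, sInf_insert_of_lt (sInf_lt_of_subset_dropMin hW)]

variable (hWi : W.Infinite)
include hWi

theorem initSeg_erase : InitSegSet ((L.σ (insert (sInf L.X) W)).erase (sInf L.X)) W := by
  have h := head_initSeg (insert_sInf_subset hW) (insert_sInf_infinite hWi)
  rwa [head_insert_sInf hW, dropMin_insert (sInf_lt_of_subset_dropMin hW)] at h

theorem isTail_sdiff_erase (hW' : W' ⊆ dropMin L.X) (hW'i : W'.Infinite)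
    (h : InitSegSet ((L.σ (insert (sInf L.X) W)).erase (sInf L.X)) W') :
    L.IsTail (insert (sInf L.X) W) (W' \ ↑((L.σ (insert (sInf L.X) W)).erase (sInf L.X))) := by
  rw [← head_insert_sInf hW] at h ⊢
  refine isTail_of_initSeg (insert_sInf_subset hW) (insert_sInf_infinite hWi)
    (hW'.trans (dropMin_subset _)) hW'i ?_ h
  rw [sInf_insert_of_lt (sInf_lt_of_subset_dropMin hW)]
  exact sInf_lt_of_subset_dropMin hW'

theorem σ_insert_sInf_eq (hW' : W' ⊆ dropMin L.X) (hW'i : W'.Infinite)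
    (h : InitSegSet ((L.σ (insert (sInf L.X) W)).erase (sInf L.X)) W') :
    L.σ (insert (sInf L.X) W') = L.σ (insert (sInf L.X) W) := by
  refine (L.eq_of_initSeg _ (insert_sInf_subset hW) (insert_sInf_infinite hWi) _
    (insert_sInf_subset hW') (insert_sInf_infinite hW'i) ?_).1
  rw [initSegSet_iff_head (insert_sInf_subset hW) (insert_sInf_infinite hWi)
      (insert_nonempty _ _), sInf_insert_of_lt (sInf_lt_of_subset_dropMin hW'),
    sInf_insert_of_lt (sInf_lt_of_subset_dropMin hW),
    dropMin_insert (sInf_lt_of_subset_dropMin hW'), head_insert_sInf hW]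
  exact ⟨rfl, h⟩

theorem σ_insert_sInf_subset (hW' : W' ⊆ dropMin L.X) (hW'i : W'.Infinite)
    (h : (L.σ (insert (sInf L.X) W)).erase (sInf L.X) ⊆
      (L.σ (insert (sInf L.X) W')).erase (sInf L.X)) :
    L.σ (insert (sInf L.X) W) ⊆ L.σ (insert (sInf L.X) W') := by
  rw [← insert_head (insert_sInf_subset hW) (insert_sInf_infinite hWi),
    ← insert_head (insert_sInf_subset hW') (insert_sInf_infinite hW'i),
    head_insert_sInf hW, head_insert_sInf hW',
    sInf_insert_of_lt (sInf_lt_of_subset_dropMin hW),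
    sInf_insert_of_lt (sInf_lt_of_subset_dropMin hW')]
  exact Finset.insert_subset_insert _ h

end Derived

/-- Once `v ∘ dropMin = v ∘ dropBlock`, the value of `v` on a subset of `dropMin L.X` no longer
depends on what follows its block `σ (insert (sInf L.X) W) \ {sInf L.X}`. -/
noncomputable def derived (L : Level P v)
    (hhead : ∀ W ⊆ L.X, W.Infinite → (L.head W).Nonempty)
    (hEQ : ∀ V ⊆ L.X, V.Infinite → v (dropMin V) = v (L.dropBlock V)) : Level P v where
  X := dropMin L.X
  infinite := L.infinite.dropMin
  σ W := (L.σ (insert (sInf L.X) W)).erase (sInf L.X)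
  nonempty W hW hWi := head_insert_sInf hW ▸
    hhead _ (insert_sInf_subset hW) (insert_sInf_infinite hWi)
  initSeg W hW hWi := initSeg_erase hW hWi
  eq_of_initSeg W hW hWi W' hW' hW'i h := by
    refine ⟨by rw [σ_insert_sInf_eq hW hWi hW' hW'i h], ?_⟩
    have h' := (isTail_sdiff_erase hW hWi hW' hW'i h).v_union_eq hEQ
      (isTail_sdiff_erase hW hWi hW hWi (initSeg_erase hW hWi))
    rwa [head_insert_sInf hW, h.union_sdiff, (initSeg_erase hW hWi).union_sdiff] at h'
  antichain W hW hWi W' hW' hW'i h := by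
    rw [L.antichain _ (insert_sInf_subset hW) (insert_sInf_infinite hWi) _
      (insert_sInf_subset hW') (insert_sInf_infinite hW'i)
      (σ_insert_sInf_subset hW hWi hW' hW'i h)]
  bad W hW := L.bad W (hW.trans (dropMin_subset _))

theorem exists_derived [WellQuasiOrderedLE P] (hfin : (nonPrincipalIdeals P).Finite)
    (L : Level P v) :
    ∃ a ∈ L.X, ∃ L' : Level P v, L'.X ⊆ L.X ∧ (∀ y ∈ L'.X, a < y) ∧
      ∀ W ⊆ L'.X, W.Infinite → L'.σ W = (L.σ (insert a W)).erase a := by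
  obtain ⟨Y₁, hY₁, hY₁i, hhead⟩ := L.exists_restrict_head_nonempty
  obtain ⟨Y₂, hY₂, hY₂i, A, hA⟩ := (L.restrict Y₁ hY₁ hY₁i).exists_restrict_pattern hfin
  obtain ⟨Y₃, hY₃, hY₃i, d, hC⟩ :=
    ((L.restrict Y₁ hY₁ hY₁i).restrict Y₂ hY₂ hY₂i).exists_restrict_rel_const
  set L₃ := ((L.restrict Y₁ hY₁ hY₁i).restrict Y₂ hY₂ hY₂i).restrict Y₃ hY₃ hY₃i
  have hd₁ : d.1 := rel_const_fst (L := L₃) hC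
  have hd₂ : d.2 := rel_const_snd (L := L₃) hC (fun W hW => hA W (hW.trans hY₃)) hd₁
  have hEQ : ∀ V ⊆ L₃.X, V.Infinite → v (dropMin V) = v (L₃.dropBlock V) := fun V hV hVi =>
    le_antisymm ((congrArg Prod.fst (hC V hV hVi)).mpr hd₁)
      ((congrArg Prod.snd (hC V hV hVi)).mpr hd₂)
  have hY : Y₃ ⊆ L.X := hY₃.trans (hY₂.trans hY₁)
  exact ⟨sInf Y₃, hY (Nat.sInf_mem hY₃i.nonempty),
    L₃.derived (fun W hW => hhead W (hW.trans (hY₃.trans hY₂))) hEQ,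
    (dropMin_subset _).trans hY, fun _ => sInf_lt_of_mem_dropMin, fun _ _ _ => rfl⟩

/-- A level reached from `L₀` by removing the points of `F`. -/
structure Stage (L₀ : Level P v) where
  L : Level P v
  F : Finset ℕ
  X_subset : L.X ⊆ L₀.X
  F_subset : ↑F ⊆ L₀.X
  F_lt : ∀ x ∈ F, ∀ y ∈ L.X, x < y
  σ_eq : ∀ W ⊆ L.X, W.Infinite → L.σ W = L₀.σ (↑F ∪ W) \ F

theorem Stage.exists_next [WellQuasiOrderedLE P] (hfin : (nonPrincipalIdeals P).Finite)
    {L₀ : Level P v} (S : Stage L₀) :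
    ∃ S' : Stage L₀, ∃ a, (∀ x ∈ S.F, x < a) ∧ S'.F = insert a S.F := by
  obtain ⟨a, haX, L', hL'X, haL', hσ'⟩ := S.L.exists_derived hfin
  refine ⟨⟨L', insert a S.F, hL'X.trans S.X_subset, ?_, ?_, fun W hW hWi => ?_⟩, a,
    fun x hx => S.F_lt x hx a haX, rfl⟩
  · rw [Finset.coe_insert]
    exact Set.insert_subset (S.X_subset haX) S.F_subset
  · intro x hx y hy
    rcases Finset.mem_insert.1 hx with rfl | hx
    exacts [haL' y hy, S.F_lt x hx y (hL'X hy)]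
  · rw [hσ' W hW hWi, S.σ_eq _ (Set.insert_subset haX (hW.trans hL'X))
      (hWi.mono (subset_insert _ _)), Finset.sdiff_insert, Finset.coe_insert, insert_union,
      union_insert]

theorem isEmpty [WellQuasiOrderedLE P] (hfin : (nonPrincipalIdeals P).Finite) :
    IsEmpty (Level P v) := by
  refine ⟨fun L₀ => ?_⟩
  have S₀ : Stage L₀ := ⟨L₀, ∅, subset_rfl, by simp, by simp, fun W _ _ => by simp⟩
  obtain ⟨u, hinf, hsub⟩ := exists_seq_iUnion Stage.F S₀ fun S => S.exists_next hfin
  set A := ⋃ n, ((u n).F : Set ℕ)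
  have hA : A ⊆ L₀.X := iUnion_subset fun n => (u n).F_subset
  have hσA := L₀.initSeg A hA hinf
  obtain ⟨r, hr⟩ := hsub _ hσA.1
  set S := u r
  have hunion : ↑S.F ∪ S.L.X ⊆ L₀.X := Set.union_subset S.F_subset S.X_subset
  have hinit : InitSegSet (L₀.σ A) (↑S.F ∪ S.L.X) := by
    refine ⟨(Finset.coe_subset.2 hr).trans subset_union_left, fun x hx y hy hyσ => ?_⟩
    rcases hy with hy | hy
    exacts [hσA.2 x hx y (mem_iUnion.2 ⟨r, hy⟩) hyσ, S.F_lt x (hr hx) y hy]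
  have hσ := (L₀.eq_of_initSeg A hA hinf _ hunion
    (S.L.infinite.mono subset_union_right) hinit).1
  have hne := S.L.nonempty S.L.X subset_rfl S.L.infinite
  rw [S.σ_eq _ subset_rfl S.L.infinite, hσ, Finset.sdiff_eq_empty_iff_subset.2 hr] at hne
  exact Finset.not_nonempty_empty hne

end Level

/-! ### Bad maps on barriers -/

theorem IsBlock.infinite_unionOf {B : Set (Finset ℕ)} (hB : IsBlock B) : (unionOf B).Infinite :=
  fun hfin => hB.1 <| (hfin.finite_subsets.preimage Finset.coe_injective.injOn).subset
    fun s hs => show ↑s ⊆ unionOf B from fun _ hx => mem_biUnion hs hx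

namespace IsBarrier

variable {B : Set (Finset ℕ)} (hB : IsBarrier B)
include hB

theorem eq_of_initSegSet {s t : Finset ℕ} (hs : s ∈ B) (ht : t ∈ B) {W : Set ℕ}
    (hsW : InitSegSet s W) (htW : InitSegSet t W) : s = t :=
  (hsW.subset_or_subset htW).elim (hB.2 s hs t ht) fun h => (hB.2 t ht s hs h).symm

theorem tri {s t : Finset ℕ} (hs : s ∈ B) (ht : t ∈ B) (hsne : s.Nonempty) {W : Set ℕ}
    (hsW : InitSegSet s W) (htW : InitSegSet t (dropMin W)) : Tri s t := by
  have hW : W.Nonempty := ⟨_, hsW.1 hsne.choose_spec⟩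
  have hmt : ∀ y ∈ t, sInf W < y := fun y hy => sInf_lt_of_mem_dropMin (htW.1 hy)
  have hms := hsW.sInf_mem hsne
  have hts : ¬ t ⊆ s := fun h => lt_irrefl _ (hmt _ (hB.2 t ht s hs h ▸ hms))
  have hrW := (initSegSet_insert_iff hmt hW).2 ⟨rfl, htW⟩
  have hsr : s ⊆ insert (sInf W) t := (hsW.subset_or_subset hrW).resolve_right
    fun h => hts ((Finset.subset_insert _ _).trans h)
  refine ⟨insert (sInf W) t, hsW.initSeg hrW hsr, ?_, sInf W, Finset.mem_insert_self _ _,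
    fun b hb => ?_, (Finset.erase_insert fun h => lt_irrefl _ (hmt _ h)).symm⟩
  · rintro rfl
    exact hts (Finset.subset_insert _ _)
  · rcases Finset.mem_insert.1 hb with rfl | hb
    exacts [le_rfl, (hmt b hb).le]

open Classical in
noncomputable def block (W : Set ℕ) : Finset ℕ :=
  if h : W ⊆ unionOf B ∧ W.Infinite then Classical.choose (hB.1.2 W h.1 h.2) else ∅

theorem block_spec {W : Set ℕ} (hW : W ⊆ unionOf B) (hWi : W.Infinite) :
    hB.block W ∈ B ∧ (hB.block W).Nonempty ∧ InitSegSet (hB.block W) W := by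
  rw [block, dif_pos ⟨hW, hWi⟩]
  exact Classical.choose_spec (hB.1.2 W hW hWi)

noncomputable def level {P : Type*} [PartialOrder P] (f : Finset ℕ → P)
    (hf : ¬ GoodPair (· ≤ ·) B f) : Level P (f ∘ hB.block) where
  X := unionOf B
  infinite := hB.1.infinite_unionOf
  σ := hB.block
  nonempty W hW hWi := (hB.block_spec hW hWi).2.1
  initSeg W hW hWi := (hB.block_spec hW hWi).2.2
  eq_of_initSeg W hW hWi W' hW' hW'i h := by
    have heq := hB.eq_of_initSegSet (hB.block_spec hW' hW'i).1 (hB.block_spec hW hWi).1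
      (hB.block_spec hW' hW'i).2.2 h
    exact ⟨heq, congrArg f heq⟩
  antichain W hW hWi W' hW' hW'i := hB.2 _ (hB.block_spec hW hWi).1 _ (hB.block_spec hW' hW'i).1
  bad W hW hWi hle := by
    have hD : dropMin W ⊆ unionOf B := (dropMin_subset W).trans hW
    obtain ⟨hs, hsne, hsW⟩ := hB.block_spec hW hWi
    obtain ⟨ht, -, htW⟩ := hB.block_spec hD hWi.dropMin
    exact hf ⟨_, hs, _, ht, hB.tri hs ht hsne hsW htW, hle⟩

end IsBarrier

/-- If `P` is wqo and the set of non-principal ideals of `P` is finite, then `P` is bqo. -/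
theorem stmt2 {P : Type*} [PartialOrder P]
    (hwqo : IsWqo ((· ≤ ·) : P → P → Prop))
    (hfin : {I : Set P | IsIdealRel (· ≤ ·) I ∧ ¬ IsPrincipalRel (· ≤ ·) I}.Finite) :
    IsBqo ((· ≤ ·) : P → P → Prop) := by
  have := hwqo.wellQuasiOrderedLE
  intro B hB f
  by_contra hf
  exact (Level.isEmpty hfin).false (hB.level f hf)
end

section
/- If a partially ordered set P is an interval order, then any two non-principal ideals of P are comparable under inclusion (the set of non-principal ideals of P is a chain under inclusion). -/
open Set

/-- If `P` is an interval order then any two non-principal ideals of `P` are comparable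
under inclusion. -/
theorem stmt3 {P : Type*} [PartialOrder P] (h : IsIntervalOrder P)
    (I J : Set P)
    (hI : IsIdealRel (· ≤ ·) I) (hInp : ¬ IsPrincipalRel (· ≤ ·) I)
    (hJ : IsIdealRel (· ≤ ·) J) (hJnp : ¬ IsPrincipalRel (· ≤ ·) J) :
    I ⊆ J ∨ J ⊆ I := by
  by_contra hc
  push_neg at hc
  obtain ⟨h1, h2⟩ := hc
  rw [Set.not_subset] at h1 h2
  obtain ⟨a, haI, haJ⟩ := h1
  obtain ⟨c, hcJ, hcI⟩ := h2
  obtain ⟨-, hIdc, hIdir⟩ := hI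
  obtain ⟨-, hJdc, hJdir⟩ := hJ
  -- get b ∈ I with a < b
  have hb : ∃ b ∈ I, a < b := by
    by_contra hno
    push_neg at hno
    apply hInp
    refine ⟨a, haI, fun x hx => ?_⟩
    obtain ⟨z, hzI, hxz, haz⟩ := hIdir x hx a haI
    have hza : z = a := by
      rcases eq_or_lt_of_le haz with h1 | h1
      · exact h1.symm
      · exact absurd h1 (hno z hzI)
    exact hza ▸ hxz
  have hd : ∃ d ∈ J, c < d := by
    by_contra hno
    push_neg at hno
    apply hJnp
    refine ⟨c, hcJ, fun x hx => ?_⟩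
    obtain ⟨z, hzJ, hxz, hcz⟩ := hJdir x hx c hcJ
    have hzc : z = c := by
      rcases eq_or_lt_of_le hcz with h1 | h1
      · exact h1.symm
      · exact absurd h1 (hno z hzJ)
    exact hzc ▸ hxz
  obtain ⟨b, hbI, hab⟩ := hb
  obtain ⟨d, hdJ, hcd⟩ := hd
  exact h ⟨a, b, c, d, hab, hcd,
    fun hle => haJ (hJdc a c hle hcJ),
    fun hle => hcI (hIdc c a hle haI),
    fun hle => haJ (hJdc a d hle hdJ),
    fun hle => hcI (hIdc c a (hcd.le.trans hle) haI),
    fun hle => haJ (hJdc a c (hab.le.trans hle) hcJ),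
    fun hle => hcI (hIdc c b hle hbI),
    fun hle => haJ (hJdc a d (hab.le.trans hle) hdJ),
    fun hle => hcI (hIdc c b (hcd.le.trans hle) hbI)⟩
end

section
/- Every thin block of finite subsets of ℕ is well-ordered by the lexicographic order; in particular, every barrier is well-ordered by the lexicographic order. -/
/-!
A lexicographically strictly decreasing sequence `s₀ > s₁ > ⋯` of finite sets freezes
coordinate by coordinate: for each `k`, all late `sₙ` share a proper initial segment of length
`k`. These segments exhaust an infinite set `X ⊆ ⋃ B`. If `B` is a block, some `t ∈ B` is an
initial segment of `X`, hence of every late `sₙ`, and if `B` is thin this forces `sₙ = t` for all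
large `n`, contradicting strict decrease.
-/

open Set

open Filter

namespace List

theorem IsPrefix.lt_of_mem_of_notMem {α : Type*} [Preorder α] {p q : List α} (h : p <+: q)
    (hq : q.SortedLT) {x y : α} (hx : x ∈ p) (hy : y ∈ q) (hyp : y ∉ p) : x < y := by
  obtain ⟨r, rfl⟩ := h
  exact (pairwise_append.1 hq.pairwise).2.2 x hx y ((mem_append.1 hy).resolve_left hyp)

theorem lt_of_append_lt_append_left {α : Type*} [LinearOrder α] {p u v : List α}
    (h : p ++ u < p ++ v) : u < v := by
  by_contra hvu
  exact append_left_le (List.not_lt.1 hvu) h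

theorem infinite_setOf_exists_mem {α : Type*} {p : ℕ → List α}
    (hlen : ∀ k, (p k).length = k) (hnodup : ∀ k, (p k).Nodup) : {x | ∃ k, x ∈ p k}.Infinite := by
  classical
  intro hfin
  set m := hfin.toFinset.card
  have hsub : (p (m + 1)).toFinset ⊆ hfin.toFinset := fun x hx => by
    simpa using ⟨m + 1, mem_toFinset.1 hx⟩
  have := Finset.card_le_card hsub
  rw [toFinset_card_of_nodup (hnodup _), hlen] at this
  omega

variable {α : Type*} [LinearOrder α] [WellFoundedLT α]

theorem exists_eventually_prefix_ne_of_succ_lt {L : ℕ → List α} (hL : ∀ n, L (n + 1) < L n)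
    (k : ℕ) : ∃ p : List α, p.length = k ∧ ∀ᶠ n in atTop, p <+: L n ∧ p ≠ L n := by
  induction k with
  | zero => exact ⟨[], rfl, Eventually.of_forall fun n =>
      ⟨nil_prefix, fun h => not_lt_nil _ (h ▸ hL n)⟩⟩
  | succ k ih =>
    obtain ⟨p, hlen, hp⟩ := ih
    obtain ⟨N, hN⟩ := eventually_atTop.1 hp
    have hnext : ∀ n ≥ N, ∃ x, p ++ [x] <+: L n := by
      intro n hn
      obtain ⟨⟨_ | ⟨x, r⟩, hr⟩, hne⟩ := hN n hn
      · exact absurd (by simpa using hr) hne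
      · exact ⟨x, r, by simpa using hr⟩
    obtain ⟨x₀, hx₀⟩ := hnext N le_rfl
    -- The letters after `p` decrease from stage `N` on, so the least one that occurs is final.
    obtain ⟨x, ⟨M, hMN, hM⟩, hmin⟩ :=
      wellFounded_lt.has_min {x | ∃ n ≥ N, p ++ [x] <+: L n} ⟨x₀, N, le_rfl, hx₀⟩
    have hstay : ∀ n ≥ M, p ++ [x] <+: L n := by
      refine Nat.le_induction hM fun n hn hx => ?_
      obtain ⟨y, hy⟩ := hnext (n + 1) (by omega)
      have hyx : y ≤ x := by
        obtain ⟨u, hu⟩ := hy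
        obtain ⟨v, hv⟩ := hx
        have := hL n
        rw [← hu, ← hv, append_assoc, append_assoc] at this
        exact head_le_of_lt (lt_of_append_lt_append_left this)
      have hxy : x ≤ y := not_lt.1 (hmin y ⟨n + 1, by omega, hy⟩)
      exact le_antisymm hyx hxy ▸ hy
    refine ⟨p ++ [x], by simp [hlen], eventually_atTop.2 ⟨M, fun n hn => ⟨hstay n hn, ?_⟩⟩⟩
    intro h
    exact (h ▸ hstay (n + 1) (by omega)).le (hL n)

end List

theorem initSeg_toFinset_of_prefix_sort {p : List ℕ} {s : Finset ℕ}
    (h : p <+: s.sort (· ≤ ·)) : InitSeg p.toFinset s := by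
  refine ⟨fun x hx => ?_, fun x hx y hy hyp => ?_⟩
  · simpa using h.subset (List.mem_toFinset.1 hx)
  · exact h.lt_of_mem_of_notMem s.sortedLT_sort (List.mem_toFinset.1 hx)
      ((s.mem_sort _).2 hy) (by simpa using hyp)

theorem InitSegSet.eq_of_card_eq {u v : Finset ℕ} {X : Set ℕ} (hu : InitSegSet u X)
    (hv : InitSegSet v X) (h : u.card = v.card) : u = v := by
  by_cases huv : u ⊆ v
  · exact Finset.eq_of_subset_of_card_le huv h.ge
  obtain ⟨x, hxu, hxv⟩ := Finset.not_subset.1 huv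
  have hvu : v ⊆ u := fun y hyv => by
    by_contra hyu
    exact (hu.2 x hxu y (hv.1 hyv) hyu).not_gt (hv.2 y hyv x (hu.1 hxu) hxv)
  exact (Finset.eq_of_subset_of_card_le hvu h.le).symm

theorem initSegSet_toFinset_setOf_exists_mem {p : ℕ → List ℕ} (hsorted : ∀ k, (p k).SortedLT)
    (hmono : ∀ k j, k ≤ j → p k <+: p j) (k : ℕ) :
    InitSegSet (p k).toFinset {x | ∃ k, x ∈ p k} := by
  refine ⟨fun x hx => ⟨k, List.mem_toFinset.1 hx⟩, fun x hx y ⟨j, hy⟩ hyp => ?_⟩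
  rw [List.mem_toFinset] at hx hyp
  rcases le_total k j with hkj | hjk
  · exact (hmono k j hkj).lt_of_mem_of_notMem (hsorted j) hx hy hyp
  · exact absurd ((hmono j k hjk).subset hy) hyp

theorem IsThinBlock.isEmpty_lexLT_descending_chain {B : Set (Finset ℕ)} (hB : IsThinBlock B) :
    IsEmpty {f : ℕ → B // ∀ n, lexLT (f (n + 1)) (f n)} := by
  refine ⟨fun ⟨f, hf⟩ => ?_⟩
  choose p hlen hp using List.exists_eventually_prefix_ne_of_succ_lt
    (L := fun n => (f n : Finset ℕ).sort (· ≤ ·)) hf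
  have hpre : ∀ k, ∀ᶠ n in atTop, p k <+: (f n : Finset ℕ).sort (· ≤ ·) :=
    fun k => (hp k).mono fun _ h => h.1
  have hsorted : ∀ k, (p k).SortedLT := fun k =>
    let ⟨n, hn⟩ := (hpre k).exists
    ((Finset.sortedLT_sort _).pairwise.sublist hn.sublist).sortedLT
  have hmono : ∀ k j, k ≤ j → p k <+: p j := fun k j hkj =>
    let ⟨n, hk, hj⟩ := ((hpre k).and (hpre j)).exists
    List.prefix_of_prefix_length_le hk hj (by rw [hlen, hlen]; exact hkj)
  set X := {x | ∃ k, x ∈ p k}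
  have hXB : X ⊆ unionOf B := fun x ⟨k, hx⟩ =>
    let ⟨n, hn⟩ := (hpre k).exists
    Set.mem_biUnion (f n).2 (by simpa using hn.subset hx)
  obtain ⟨t, htB, -, ht⟩ := hB.1.2 X hXB
    (List.infinite_setOf_exists_mem hlen fun k => (hsorted k).nodup)
  have htp : t = (p t.card).toFinset := ht.eq_of_card_eq
    (initSegSet_toFinset_setOf_exists_mem hsorted hmono _)
    (by rw [List.toFinset_card_of_nodup (hsorted _).nodup, hlen])
  have hft : ∀ᶠ n in atTop, t = f n := (hpre t.card).mono fun n hn =>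
    hB.2 t htB _ (f n).2 (htp ▸ initSeg_toFinset_of_prefix_sort hn)
  obtain ⟨n, hn, hn1⟩ := (hft.and ((tendsto_add_atTop_nat 1).eventually hft)).exists
  have hlex := hf n
  rw [← hn, ← hn1] at hlex
  exact lt_irrefl (t.sort (· ≤ ·)) hlex

theorem lexLT_trichotomous (s t : Finset ℕ) : lexLT s t ∨ s = t ∨ lexLT t s := by
  rcases lt_trichotomy (s.sort (· ≤ ·)) (t.sort (· ≤ ·)) with h | h | h
  · exact Or.inl h
  · exact Or.inr (Or.inl (by simpa using congrArg List.toFinset h))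
  · exact Or.inr (Or.inr h)

theorem IsThinBlock.exists_forall_eq_or_lexLT {B C : Set (Finset ℕ)} (hB : IsThinBlock B)
    (hCB : C ⊆ B) (hC : C.Nonempty) : ∃ s ∈ C, ∀ t ∈ C, s = t ∨ lexLT s t := by
  obtain ⟨s₀, hs₀⟩ := hC
  have hwf : WellFounded fun s t : B => lexLT s t :=
    wellFounded_iff_isEmpty_descending_chain.2 hB.isEmpty_lexLT_descending_chain
  obtain ⟨⟨s, _⟩, hs, hmin⟩ := hwf.has_min {u : B | (u : Finset ℕ) ∈ C} ⟨⟨s₀, hCB hs₀⟩, hs₀⟩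
  refine ⟨s, hs, fun t ht => ?_⟩
  rcases lexLT_trichotomous s t with h | h | h
  · exact Or.inr h
  · exact Or.inl h
  · exact absurd h (hmin ⟨t, hCB ht⟩ ht)

theorem IsBarrier.isThinBlock {B : Set (Finset ℕ)} (hB : IsBarrier B) : IsThinBlock B :=
  ⟨hB.1, fun s hs t ht hst => hB.2 s hs t ht hst.1⟩

/-- Every thin block is well-ordered by the lexicographic order; in particular every
barrier is well-ordered by the lexicographic order. -/
theorem stmt8 :
    (∀ B : Set (Finset ℕ), IsThinBlock B →
      ∀ C : Set (Finset ℕ), C ⊆ B → C.Nonempty → ∃ s ∈ C, ∀ t ∈ C, s = t ∨ lexLT s t) ∧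
    (∀ B : Set (Finset ℕ), IsBarrier B →
      ∀ C : Set (Finset ℕ), C ⊆ B → C.Nonempty → ∃ s ∈ C, ∀ t ∈ C, s = t ∨ lexLT s t) :=
  ⟨fun _ hB _ => hB.exists_forall_eq_or_lexLT,
    fun _ hB _ => hB.isThinBlock.exists_forall_eq_or_lexLT⟩
end

section
/- Every barrier B contains an end-closed subbarrier: there is an infinite subset X of ⋃B such that B' := B ∩ [X]^{<ω} (the members of B included in X) is an end-closed barrier. -/
open Set

/-- A family `D` of finite subsets of `ℕ` is end-closed if for every `t ∈ D` with largest
element `m` and every `a ∈ ⋃D` greater than every element of `t_* = t \ {m}`, the set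
`t_* ∪ {a}` belongs to `D`. -/
def IsEndClosed (D : Set (Finset ℕ)) : Prop :=
  ∀ t ∈ D, ∀ m ∈ t, (∀ b ∈ t, b ≤ m) →
    ∀ a ∈ unionOf D, (∀ b ∈ t.erase m, b < a) → insert a (t.erase m) ∈ D

open scoped Classical

/-- shrink Y so that membership of `insert b u` in B is constant for b in result -/
noncomputable def shrink (B : Set (Finset ℕ)) (u : Finset ℕ) (Y : Set ℕ) : Set ℕ :=
  if ({b ∈ Y | insert b u ∈ B}).Infinite then {b ∈ Y | insert b u ∈ B}
  else {b ∈ Y | insert b u ∉ B}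

lemma shrink_subset (B : Set (Finset ℕ)) (u : Finset ℕ) (Y : Set ℕ) :
    shrink B u Y ⊆ Y := by
  unfold shrink; split <;> exact fun b hb => hb.1

lemma shrink_infinite (B : Set (Finset ℕ)) (u : Finset ℕ) {Y : Set ℕ}
    (hY : Y.Infinite) : (shrink B u Y).Infinite := by
  unfold shrink; split
  · assumption
  · rename_i h
    have : Y \ {b ∈ Y | insert b u ∈ B} ⊆ {b ∈ Y | insert b u ∉ B} := by
      intro b hb
      exact ⟨hb.1, fun hc => hb.2 ⟨hb.1, hc⟩⟩
    exact (hY.diff (Set.not_infinite.mp h)).mono this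

lemma shrink_const (B : Set (Finset ℕ)) (u : Finset ℕ) (Y : Set ℕ) {a b : ℕ}
    (ha : a ∈ shrink B u Y) (hb : b ∈ shrink B u Y) :
    (insert a u ∈ B ↔ insert b u ∈ B) := by
  unfold shrink at ha hb; split at ha <;> split at hb <;>
    first
      | exact iff_of_true ha.2 hb.2
      | exact iff_of_false ha.2 hb.2
      | simp_all

noncomputable def shrinkList (B : Set (Finset ℕ)) (l : List (Finset ℕ)) (Y : Set ℕ) : Set ℕ :=
  l.foldl (fun Z u => shrink B u Z) Y

lemma shrinkList_subset (B : Set (Finset ℕ)) (l : List (Finset ℕ)) (Y : Set ℕ) :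
    shrinkList B l Y ⊆ Y := by
  induction l generalizing Y with
  | nil => exact fun _ h => h
  | cons v l ih => exact (ih (shrink B v Y)).trans (shrink_subset B v Y)

lemma shrinkList_infinite (B : Set (Finset ℕ)) (l : List (Finset ℕ)) {Y : Set ℕ}
    (hY : Y.Infinite) : (shrinkList B l Y).Infinite := by
  induction l generalizing Y with
  | nil => exact hY
  | cons v l ih => exact ih (shrink_infinite B v hY)

lemma shrinkList_const (B : Set (Finset ℕ)) (l : List (Finset ℕ)) (Y : Set ℕ)
    {u : Finset ℕ} (hu : u ∈ l) {a b : ℕ}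
    (ha : a ∈ shrinkList B l Y) (hb : b ∈ shrinkList B l Y) :
    (insert a u ∈ B ↔ insert b u ∈ B) := by
  induction l generalizing Y with
  | nil => cases hu
  | cons v l ih =>
    rcases List.mem_cons.mp hu with h | h
    · subst h
      exact shrink_const B u Y
        (shrinkList_subset B l _ ha) (shrinkList_subset B l _ hb)
    · exact ih _ h ha hb

noncomputable def shrinkAll (B : Set (Finset ℕ)) (P : Finset ℕ) (Y : Set ℕ) : Set ℕ :=
  shrinkList B P.powerset.toList Y

lemma shrinkAll_subset (B : Set (Finset ℕ)) (P : Finset ℕ) (Y : Set ℕ) :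
    shrinkAll B P Y ⊆ Y := shrinkList_subset _ _ _

lemma shrinkAll_infinite (B : Set (Finset ℕ)) (P : Finset ℕ) {Y : Set ℕ}
    (hY : Y.Infinite) : (shrinkAll B P Y).Infinite := shrinkList_infinite _ _ hY

lemma shrinkAll_const (B : Set (Finset ℕ)) (P : Finset ℕ) (Y : Set ℕ)
    {u : Finset ℕ} (hu : u ⊆ P) {a b : ℕ}
    (ha : a ∈ shrinkAll B P Y) (hb : b ∈ shrinkAll B P Y) :
    (insert a u ∈ B ↔ insert b u ∈ B) :=
  shrinkList_const B _ Y (Finset.mem_toList.mpr (Finset.mem_powerset.mpr hu)) ha hb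

noncomputable def hseq (B : Set (Finset ℕ)) (U : Set ℕ) : ℕ → Finset ℕ × Set ℕ
  | 0 => (∅, shrinkAll B ∅ U)
  | n+1 => (insert (sInf (hseq B U n).2) (hseq B U n).1,
      shrinkAll B (insert (sInf (hseq B U n).2) (hseq B U n).1)
        ((hseq B U n).2 \ {sInf (hseq B U n).2}))

noncomputable def xseq (B : Set (Finset ℕ)) (U : Set ℕ) (n : ℕ) : ℕ :=
  sInf (hseq B U n).2

lemma hseq_snd_infinite (B : Set (Finset ℕ)) {U : Set ℕ} (hU : U.Infinite) :
    ∀ n, ((hseq B U n).2).Infinite := by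
  intro n
  induction n with
  | zero => exact shrinkAll_infinite B _ hU
  | succ n ih => exact shrinkAll_infinite B _ (ih.diff (Set.finite_singleton _))

lemma hseq_snd_succ (B : Set (Finset ℕ)) (U : Set ℕ) (n : ℕ) :
    (hseq B U (n+1)).2 ⊆ (hseq B U n).2 \ {xseq B U n} := by
  exact shrinkAll_subset _ _ _

lemma hseq_snd_mono (B : Set (Finset ℕ)) (U : Set ℕ) {n m : ℕ} (h : n ≤ m) :
    (hseq B U m).2 ⊆ (hseq B U n).2 := by
  induction m with
  | zero => simp_all
  | succ m ih =>
    rcases Nat.lt_or_ge n (m+1) with hc | hc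
    · exact ((hseq_snd_succ B U m).trans Set.diff_subset).trans (ih (Nat.lt_succ_iff.mp hc))
    · have : n = m + 1 := le_antisymm h hc
      subst this; exact fun _ h => h

lemma xseq_mem (B : Set (Finset ℕ)) {U : Set ℕ} (hU : U.Infinite) {n m : ℕ} (h : n ≤ m) :
    xseq B U m ∈ (hseq B U n).2 :=
  hseq_snd_mono B U h (Nat.sInf_mem (hseq_snd_infinite B hU m).nonempty)

lemma xseq_strictMono (B : Set (Finset ℕ)) {U : Set ℕ} (hU : U.Infinite) :
    StrictMono (xseq B U) := by
  apply strictMono_nat_of_lt_succ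
  intro n
  have h1 : xseq B U (n+1) ∈ (hseq B U n).2 \ {xseq B U n} :=
    hseq_snd_succ B U n (Nat.sInf_mem (hseq_snd_infinite B hU (n+1)).nonempty)
  have h2 : xseq B U n ≤ xseq B U (n+1) := Nat.sInf_le h1.1
  exact lt_of_le_of_ne h2 (fun h => h1.2 h.symm)

lemma hseq_fst (B : Set (Finset ℕ)) (U : Set ℕ) :
    ∀ n, (hseq B U n).1 = (Finset.range n).image (xseq B U) := by
  intro n
  induction n with
  | zero => rfl
  | succ n ih =>
    show insert (xseq B U n) (hseq B U n).1 = _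
    rw [ih, Finset.range_add_one, Finset.image_insert]

lemma hseq_key (B : Set (Finset ℕ)) (U : Set ℕ) (n : ℕ) {u : Finset ℕ}
    (hu : u ⊆ (hseq B U n).1) {a b : ℕ}
    (ha : a ∈ (hseq B U n).2) (hb : b ∈ (hseq B U n).2) :
    (insert a u ∈ B ↔ insert b u ∈ B) := by
  cases n with
  | zero => exact shrinkAll_const B _ _ hu ha hb
  | succ n => exact shrinkAll_const B _ _ hu ha hb

lemma hseq_snd_subset_U (B : Set (Finset ℕ)) (U : Set ℕ) (n : ℕ) :
    (hseq B U n).2 ⊆ U :=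
  (hseq_snd_mono B U (Nat.zero_le n)).trans (shrinkAll_subset _ _ _)

lemma unionOf_mono {A C : Set (Finset ℕ)} (h : A ⊆ C) : unionOf A ⊆ unionOf C := by
  intro a ha
  simp only [unionOf, Set.mem_iUnion] at *
  obtain ⟨s, hs, has⟩ := ha
  exact ⟨s, h hs, has⟩

lemma mem_unionOf {B : Set (Finset ℕ)} {s : Finset ℕ} (hs : s ∈ B) {a : ℕ} (ha : a ∈ s) :
    a ∈ unionOf B := by
  simp only [unionOf, Set.mem_iUnion]; exact ⟨s, hs, ha⟩

/-- Every barrier `B` contains an end-closed subbarrier: there is an infinite subset `X`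
of `⋃B` such that the set of members of `B` included in `X` is an end-closed barrier. -/
theorem stmt9 (B : Set (Finset ℕ)) (hB : IsBarrier B) :
    ∃ X : Set ℕ, X ⊆ unionOf B ∧ X.Infinite ∧
      IsBarrier {s ∈ B | ↑s ⊆ X} ∧ IsEndClosed {s ∈ B | ↑s ⊆ X} := by
  obtain ⟨⟨hBinf, hblock⟩, hanti⟩ := hB
  set U := unionOf B with hUdef
  have hU : U.Infinite := by
    by_contra h
    rw [Set.not_infinite] at h
    have him : ((fun s : Finset ℕ => (s : Set ℕ)) '' B).Finite := by
      apply h.finite_subsets.subset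
      rintro _ ⟨s, hs, rfl⟩
      exact fun a ha => mem_unionOf hs ha
    exact hBinf (Set.Finite.of_finite_image him
      (Set.injOn_of_injective Finset.coe_injective))
  set x := xseq B U with hxdef
  set X := Set.range x with hXdef
  have hxmem : ∀ {n m : ℕ}, n ≤ m → x m ∈ (hseq B U n).2 := fun h => xseq_mem B hU h
  have hXU : X ⊆ U := by
    rintro _ ⟨n, rfl⟩
    exact hseq_snd_subset_U B U n (hxmem le_rfl)
  have hXinf : X.Infinite :=
    Set.infinite_range_of_injective (xseq_strictMono B hU).injective
  set B' := {s ∈ B | ↑s ⊆ X} with hB'def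
  have hB'B : B' ⊆ B := fun s hs => hs.1
  have hUB' : unionOf B' ⊆ X := by
    intro a ha
    simp only [unionOf, Set.mem_iUnion] at ha
    obtain ⟨s, hs, has⟩ := ha
    exact hs.2 has
  refine ⟨X, hXU, hXinf, ⟨⟨?_, ?_⟩, ?_⟩, ?_⟩
  · -- B' infinite
    by_contra h
    rw [Set.not_infinite] at h
    have hT : (⋃ s ∈ B', (s : Set ℕ)).Finite :=
      h.biUnion (fun s _ => s.finite_toSet)
    obtain ⟨N, hN⟩ := hT.bddAbove
    have hZinf : (X \ Set.Iic N).Infinite := hXinf.diff (Set.finite_Iic N)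
    obtain ⟨s, hsB, hsne, hseg⟩ := hblock (X \ Set.Iic N)
      (fun a ha => hXU ha.1) hZinf
    have hsX : ↑s ⊆ X := fun a ha => (hseg.1 ha).1
    obtain ⟨a, ha⟩ := hsne
    have h1 : a ∈ ⋃ s ∈ B', (s : Set ℕ) :=
      Set.mem_biUnion (Set.mem_sep hsB hsX) (Finset.mem_coe.mpr ha)
    exact (hseg.1 (Finset.mem_coe.mpr ha)).2 (hN h1)
  · -- block property
    intro Z hZsub hZinf
    have hZU : Z ⊆ unionOf B := hZsub.trans (unionOf_mono hB'B)
    obtain ⟨s, hsB, hsne, hseg⟩ := hblock Z hZU hZinf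
    exact ⟨s, Set.mem_sep hsB (fun a ha => hUB' (hZsub (hseg.1 ha))), hsne, hseg⟩
  · -- antichain
    intro s hs t ht hst
    exact hanti s hs.1 t ht.1 hst
  · -- end-closed
    intro t ht m hm hmax a ha hlt
    obtain ⟨htB, htX⟩ := ht
    have haX : a ∈ X := hUB' ha
    obtain ⟨j, hj⟩ := haX
    have hmX : m ∈ X := htX (Finset.mem_coe.mpr hm)
    obtain ⟨i, hi⟩ := hmX
    set u := t.erase m with hudef
    have hk : ∀ y ∈ u, ∃ k, k < min i j ∧ x k = y := by
      intro y hy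
      have hyX : y ∈ X := htX (Finset.mem_coe.mpr (Finset.mem_of_mem_erase hy))
      obtain ⟨k, hk⟩ := hyX
      refine ⟨k, ?_, hk⟩
      have hym : y < m := lt_of_le_of_ne (hmax y (Finset.mem_of_mem_erase hy))
        (Finset.ne_of_mem_erase hy)
      have hya : y < a := hlt y hy
      rw [lt_min_iff]
      constructor
      · exact (xseq_strictMono B hU).lt_iff_lt.mp (show x k < x i by rw [hk, hi]; exact hym)
      · exact (xseq_strictMono B hU).lt_iff_lt.mp (show x k < x j by rw [hk, hj]; exact hya)
    have huP : u ⊆ (hseq B U (min i j)).1 := by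
      rw [hseq_fst]
      intro y hy
      obtain ⟨k, hkn, hky⟩ := hk y hy
      exact Finset.mem_image.mpr ⟨k, Finset.mem_range.mpr hkn, hky⟩
    have ham : m ∈ (hseq B U (min i j)).2 := hi ▸ hxmem (min_le_left i j)
    have haa : a ∈ (hseq B U (min i j)).2 := hj ▸ hxmem (min_le_right i j)
    have hiff := hseq_key B U (min i j) huP ham haa
    have hins : insert m u = t := Finset.insert_erase hm
    have h2 : insert a u ∈ B := hiff.mp (by rw [hins]; exact htB)
    refine Set.mem_sep h2 ?_
    intro y hy
    rcases Finset.mem_insert.mp (Finset.mem_coe.mp hy) with h | h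
    · exact h ▸ hUB' ha
    · exact htX (Finset.mem_coe.mpr (Finset.mem_of_mem_erase h))
end

section
/- Let P be a partially ordered set. If P is well-quasi-ordered, then the set 𝒥(P) of ideals of P, viewed as a subspace of the product space 2^P, is a compact scattered topological space whose isolated points are exactly the principal ideals of P. -/
open Set

section Aux

variable {P : Type*} [PartialOrder P]

/-- From wqo we get the "partially well ordered" property: every sequence has a good pair. -/
lemma aux_pwo (hwqo : IsWqo ((· ≤ ·) : P → P → Prop)) (f : ℕ → P) :
    ∃ m n, m < n ∧ f m ≤ f n := by
  by_contra hbad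
  push_neg at hbad
  obtain ⟨g, hg | hg⟩ := exists_increasing_or_nonincreasing_subseq' (fun a b => b < a) f
  · exact hwqo.1 ⟨fun n => f (g n), fun n =>
      ⟨(hg n).le, not_le_of_gt (hg n)⟩⟩
  · refine hwqo.2 ⟨fun n => f (g n), fun m n hmn => ?_⟩
    rcases hmn.lt_or_gt with h | h
    · exact hbad _ _ (g.strictMono h)
    · intro hle
      have h1 : ¬ f (g m) < f (g n) := hg n m h
      have h2 : f (g m) = f (g n) := le_antisymm hle (by
        by_contra hne
        exact h1 (lt_of_le_of_ne hle (fun e => hne (e ▸ le_refl _))))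
      exact hbad (g n) (g m) (g.strictMono h) (le_of_eq h2.symm)

/-- Finite basis lemma: any subset of a wqo has a finite dominating-from-below subset. -/
lemma aux_basis (hwqo : IsWqo ((· ≤ ·) : P → P → Prop)) (C : Set P) :
    ∃ F : Finset P, ↑F ⊆ C ∧ ∀ c ∈ C, ∃ m ∈ F, m ≤ c := by
  classical
  set M : Set P := {c ∈ C | ∀ c' ∈ C, c' ≤ c → c' = c} with hM
  have hMfin : M.Finite := by
    by_contra hinf
    have hinf' : M.Infinite := hinf
    set e := hinf'.natEmbedding
    obtain ⟨m, n, hmn, hle⟩ := aux_pwo hwqo (fun n => (e n).1)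
    have := ((e n).2).2 _ ((e m).2).1 hle
    exact hmn.ne (e.injective (Subtype.ext this))
  refine ⟨hMfin.toFinset, by simp [hM, Set.sep_subset], fun c hc => ?_⟩
  -- find a minimal element below c
  have hwf : WellFounded ((· < ·) : P → P → Prop) := by
    rw [RelEmbedding.wellFounded_iff_isEmpty]
    constructor
    intro emb
    obtain ⟨m, n, hmn, hle⟩ := aux_pwo hwqo (fun n => emb n)
    have : emb n < emb m := by
      clear hle
      induction hmn with
      | refl => exact emb.map_rel_iff.2 (Nat.lt_succ_self _)
      | step h ih => exact (emb.map_rel_iff.2 (Nat.lt_succ_self _)).trans ih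
    exact absurd hle (not_le_of_gt this)
  obtain ⟨m, hm, hmin⟩ := hwf.has_min {c' ∈ C | c' ≤ c} ⟨c, hc, le_refl c⟩
  refine ⟨m, ?_, hm.2⟩
  rw [Set.Finite.mem_toFinset]
  exact ⟨hm.1, fun c' hc' hle => by
    by_contra hne
    exact hmin c' ⟨hc', hle.trans hm.2⟩ (lt_of_le_of_ne hle hne)⟩

/-- Basic open sets in `P → Bool` given by finitely many coordinate constraints. -/
lemma aux_open (F G : Finset P) :
    IsOpen {g : P → Bool | (∀ x ∈ F, g x = true) ∧ ∀ x ∈ G, g x = false} := by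
  have : {g : P → Bool | (∀ x ∈ F, g x = true) ∧ ∀ x ∈ G, g x = false}
      = (⋂ x ∈ F, (fun g : P → Bool => g x) ⁻¹' {true}) ∩
        (⋂ x ∈ G, (fun g : P → Bool => g x) ⁻¹' {false}) := by
    ext g; simp [Set.mem_iInter]
  rw [this]
  exact IsOpen.inter
    (isOpen_biInter_finset fun x _ => (continuous_apply x).isOpen_preimage _ (isOpen_discrete _))
    (isOpen_biInter_finset fun x _ => (continuous_apply x).isOpen_preimage _ (isOpen_discrete _))

/-- An ideal contains an upper bound for any finite subset. -/
lemma aux_finsetBound {I : Set P} (hI : IsIdealRel (· ≤ ·) I) (T : Finset P)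
    (hT : ↑T ⊆ I) : ∃ z ∈ I, ∀ x ∈ T, x ≤ z := by
  classical
  induction T using Finset.induction_on with
  | empty => obtain ⟨z, hz⟩ := hI.1; exact ⟨z, hz, by simp⟩
  | @insert a s ha ih =>
    obtain ⟨z, hz, hzb⟩ := ih (fun x hx => hT (by simp [hx]))
    have haI : a ∈ I := hT (by simp)
    obtain ⟨w, hw, haw, hzw⟩ := hI.2.2 a haI z hz
    exact ⟨w, hw, fun x hx => by
      rcases Finset.mem_insert.mp hx with rfl | hx
      · exact haw
      · exact (hzb x hx).trans hzw⟩

lemma aux_ext {j g : {f : P → Bool // IsIdealRel (· ≤ ·) {x : P | f x = true}}}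
    (h : {x : P | g.1 x = true} = {x : P | j.1 x = true}) : g = j := by
  apply Subtype.ext
  funext x
  have := Set.ext_iff.mp h x
  simp only [Set.mem_setOf_eq] at this
  cases hg : g.1 x <;> cases hj : j.1 x <;> simp_all

end Aux

/-- If `P` is wqo then the set `𝒥(P)` of ideals of `P`, viewed (via characteristic
functions) as a subspace of the product space `2^P`, is a compact scattered space whose
isolated points are exactly the principal ideals of `P`. -/
theorem stmt11 {P : Type*} [PartialOrder P]
    (hwqo : IsWqo ((· ≤ ·) : P → P → Prop)) :
    CompactSpace {f : P → Bool // IsIdealRel (· ≤ ·) {x : P | f x = true}} ∧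
    (∀ S : Set {f : P → Bool // IsIdealRel (· ≤ ·) {x : P | f x = true}}, S.Nonempty →
      ∃ j ∈ S, ∃ U : Set {f : P → Bool // IsIdealRel (· ≤ ·) {x : P | f x = true}},
        IsOpen U ∧ U ∩ S = {j}) ∧
    (∀ j : {f : P → Bool // IsIdealRel (· ≤ ·) {x : P | f x = true}},
      IsOpen ({j} : Set {f : P → Bool // IsIdealRel (· ≤ ·) {x : P | f x = true}}) ↔
        IsPrincipalRel (· ≤ ·) {x : P | j.1 x = true}) := by
  classical
  -- Part 1 : compactness
  have hclosed : IsClosed {f : P → Bool | IsIdealRel (· ≤ ·) {x : P | f x = true}} := by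
    rw [← isOpen_compl_iff, isOpen_iff_forall_mem_open]
    intro f hf
    simp only [Set.mem_compl_iff, Set.mem_setOf_eq] at hf
    by_cases hdc : ∀ x y : P, x ≤ y → f y = true → f x = true
    · by_cases hne : ∃ x, f x = true
      · -- directedness must fail
        have hdir : ¬ ∀ x ∈ {x : P | f x = true}, ∀ y ∈ {x : P | f x = true},
            ∃ z ∈ {x : P | f x = true}, x ≤ z ∧ y ≤ z := by
          intro h
          obtain ⟨x, hx⟩ := hne
          exact hf ⟨⟨x, hx⟩, fun a b hab hb => hdc a b hab hb, h⟩
        push_neg at hdir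
        obtain ⟨x, hx, y, hy, hz⟩ := hdir
        obtain ⟨F, hFsub, hFdom⟩ := aux_basis hwqo {z : P | x ≤ z ∧ y ≤ z}
        refine ⟨{g : P → Bool | (∀ a ∈ ({x, y} : Finset P), g a = true) ∧
            ∀ a ∈ F, g a = false}, ?_, aux_open _ _, ?_⟩
        · rintro g ⟨hg1, hg2⟩ hgI
          simp only [Set.mem_setOf_eq] at hgI
          obtain ⟨z, hzI, hxz, hyz⟩ := hgI.2.2 x (by
              have := hg1 x (by simp); exact this) y (by
              have := hg1 y (by simp); exact this)
          obtain ⟨m, hmF, hmz⟩ := hFdom z ⟨hxz, hyz⟩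
          have hgm : g m = true := hgI.2.1 m z hmz hzI
          rw [hg2 m hmF] at hgm
          exact Bool.false_ne_true hgm
        · refine ⟨fun a ha => ?_, fun a ha => ?_⟩
          · rcases Finset.mem_insert.mp ha with rfl | ha
            · exact hx
            · rw [Finset.mem_singleton.mp ha]; exact hy
          · have haC := hFsub ha
            by_contra hfa
            have : f a = true := by
              cases h : f a
              · exact absurd h hfa
              · rfl
            exact hz a this haC.1 haC.2
      · -- the ideal must be nonempty
        push_neg at hne
        obtain ⟨F, hFsub, hFdom⟩ := aux_basis hwqo (Set.univ : Set P)
        refine ⟨{g : P → Bool | (∀ a ∈ (∅ : Finset P), g a = true) ∧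
            ∀ a ∈ F, g a = false}, ?_, aux_open _ _, ?_⟩
        · rintro g ⟨-, hg2⟩ hgI
          simp only [Set.mem_setOf_eq] at hgI
          obtain ⟨c, hc⟩ := hgI.1
          obtain ⟨m, hmF, hmc⟩ := hFdom c (Set.mem_univ c)
          have hgm : g m = true := hgI.2.1 m c hmc hc
          rw [hg2 m hmF] at hgm
          exact Bool.false_ne_true hgm
        · exact ⟨fun a ha => absurd ha (Finset.notMem_empty a), fun a _ => by
            cases h : f a
            · rfl
            · exact absurd h (hne a)⟩
    · -- downward closedness must fail
      push_neg at hdc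
      obtain ⟨x, y, hxy, hyt, hxf⟩ := hdc
      refine ⟨{g : P → Bool | (∀ a ∈ ({y} : Finset P), g a = true) ∧
          ∀ a ∈ ({x} : Finset P), g a = false}, ?_, aux_open _ _, ?_⟩
      · rintro g ⟨hg1, hg2⟩ hgI
        simp only [Set.mem_setOf_eq] at hgI
        have : g x = true := hgI.2.1 x y hxy (hg1 y (Finset.mem_singleton_self y))
        rw [hg2 x (Finset.mem_singleton_self x)] at this
        exact Bool.false_ne_true this
      · exact ⟨fun a ha => by rw [Finset.mem_singleton.mp ha]; exact hyt,
          fun a ha => by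
            rw [Finset.mem_singleton.mp ha]
            cases h : f x
            · rfl
            · exact absurd h hxf⟩
  have hcompact : CompactSpace {f : P → Bool // IsIdealRel (· ≤ ·) {x : P | f x = true}} :=
    isCompact_iff_compactSpace.mp hclosed.isCompact
  -- well-foundedness of strict inclusion on ideals
  have hwfJ : WellFounded (fun g j : {f : P → Bool // IsIdealRel (· ≤ ·) {x : P | f x = true}} =>
      {x : P | g.1 x = true} ⊂ {x : P | j.1 x = true}) := by
    haveI : IsStrictOrder {f : P → Bool // IsIdealRel (· ≤ ·) {x : P | f x = true}}
        (fun g j => {x : P | g.1 x = true} ⊂ {x : P | j.1 x = true}) :=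
      { irrefl := fun a => ssubset_irrefl _
        trans := fun a b c h1 h2 => h1.trans h2 }
    rw [RelEmbedding.wellFounded_iff_isEmpty]
    constructor
    intro emb
    set T : ℕ → Set P := fun n => {x : P | (emb n).1 x = true} with hT
    have hstep : ∀ n, T (n + 1) ⊂ T n := fun n => emb.map_rel_iff.2 (Nat.lt_succ_self n)
    have hanti : Antitone T := antitone_nat_of_succ_le fun n => (hstep n).subset
    choose x hxin hxout using fun n => Set.exists_of_ssubset (hstep n)
    obtain ⟨m, n, hmn, hle⟩ := aux_pwo hwqo x
    have hxn : x n ∈ T (m + 1) := hanti (Nat.succ_le_of_lt hmn) (hxin n)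
    exact hxout m ((emb (m + 1)).2.2.1 (x m) (x n) hle hxn)
  refine ⟨hcompact, ?_, ?_⟩
  · -- scattered
    intro S hS
    obtain ⟨j, hjS, hjmin⟩ := hwfJ.has_min S hS
    obtain ⟨F, hFsub, hFdom⟩ := aux_basis hwqo {x : P | j.1 x = true}ᶜ
    refine ⟨j, hjS, Subtype.val ⁻¹' {g : P → Bool | (∀ a ∈ (∅ : Finset P), g a = true) ∧
        ∀ a ∈ F, g a = false}, (aux_open _ _).preimage continuous_subtype_val, ?_⟩
    apply Set.eq_singleton_iff_unique_mem.mpr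
    constructor
    · refine ⟨⟨fun a ha => absurd ha (Finset.notMem_empty a), fun a ha => ?_⟩, hjS⟩
      have : a ∈ {x : P | j.1 x = true}ᶜ := hFsub ha
      simp only [Set.mem_compl_iff, Set.mem_setOf_eq] at this
      cases h : j.1 a
      · rfl
      · exact absurd h this
    · rintro g ⟨⟨-, hg2⟩, hgS⟩
      have hsub : {x : P | g.1 x = true} ⊆ {x : P | j.1 x = true} := by
        intro x hx
        by_contra hxj
        obtain ⟨m, hmF, hmx⟩ := hFdom x hxj
        have : g.1 m = true := g.2.2.1 m x hmx hx
        rw [hg2 m hmF] at this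
        exact Bool.false_ne_true this
      have := hjmin g hgS
      have heq : {x : P | g.1 x = true} = {x : P | j.1 x = true} := by
        by_contra hne
        exact this ⟨hsub, fun h => hne (le_antisymm hsub h)⟩
      exact aux_ext heq
  · -- isolated points are exactly the principal ideals
    intro j
    constructor
    · intro hopen
      rw [isOpen_induced_iff] at hopen
      obtain ⟨V, hV, hVj⟩ := hopen
      have hjV : j.1 ∈ V := by
        have : j ∈ Subtype.val ⁻¹' V := by rw [hVj]; exact rfl
        exact this
      rw [isOpen_pi_iff] at hV
      obtain ⟨F, u, hu, hpi⟩ := hV j.1 hjV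
      set T : Finset P := F.filter (fun x => j.1 x = true) with hTdef
      have hTsub : ↑T ⊆ {x : P | j.1 x = true} := by
        intro x hx
        exact (Finset.mem_filter.mp hx).2
      obtain ⟨z, hzI, hzb⟩ := aux_finsetBound j.2 T hTsub
      have hideal : IsIdealRel (· ≤ ·) {x : P | (fun x => decide (x ≤ z)) x = true} := by
        simp only [decide_eq_true_eq]
        exact ⟨⟨z, le_refl z⟩, fun a b hab hb => le_trans hab hb,
          fun a ha b hb => ⟨z, le_refl z, ha, hb⟩⟩
      set g : {f : P → Bool // IsIdealRel (· ≤ ·) {x : P | f x = true}} :=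
        ⟨fun x => decide (x ≤ z), hideal⟩ with hgdef
      have hagree : ∀ a ∈ F, g.1 a = j.1 a := by
        intro a ha
        cases h : j.1 a
        · have : ¬ a ≤ z := fun hle => by
            have : j.1 a = true := j.2.2.1 a z hle hzI
            rw [h] at this
            exact Bool.false_ne_true this
          simp [hgdef, this]
        · have haT : a ∈ T := Finset.mem_filter.mpr ⟨ha, h⟩
          simp [hgdef, hzb a haT]
      have hgV : g.1 ∈ V := by
        apply hpi
        intro a ha
        rw [hagree a ha]
        exact (hu a ha).2
      have hgj : g = j := by
        have : g ∈ Subtype.val ⁻¹' V := hgV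
        rw [hVj] at this
        exact this
      refine ⟨z, ?_, ?_⟩
      · show j.1 z = true
        rw [← hgj]
        simp [hgdef]
      · intro x hx
        have hx' : j.1 x = true := hx
        rw [← hgj] at hx'
        simpa [hgdef] using hx'
    · rintro ⟨a, haI, hmax⟩
      have haI' : j.1 a = true := haI
      obtain ⟨F, hFsub, hFdom⟩ := aux_basis hwqo {z : P | a ≤ z ∧ z ≠ a}
      have hkey : ({j} : Set {f : P → Bool // IsIdealRel (· ≤ ·) {x : P | f x = true}}) =
          Subtype.val ⁻¹' {g : P → Bool | (∀ b ∈ ({a} : Finset P), g b = true) ∧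
            ∀ m ∈ F, g m = false} := by
        apply Set.eq_of_subset_of_subset
        · rintro g rfl
          refine ⟨fun b hb => by rw [Finset.mem_singleton.mp hb]; exact haI', fun m hm => ?_⟩
          have hmC := hFsub hm
          cases h : g.1 m
          · rfl
          · exfalso
            exact hmC.2 (le_antisymm (hmax m h) hmC.1)
        · rintro g ⟨hg1, hg2⟩
          have hga : g.1 a = true := hg1 a (Finset.mem_singleton_self a)
          have heq : {x : P | g.1 x = true} = {x : P | j.1 x = true} := by
            ext x
            simp only [Set.mem_setOf_eq]
            constructor
            · intro hx
              obtain ⟨w, hwI, hxw, haw⟩ := g.2.2.2 x hx a hga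
              have hwa : w = a := by
                by_contra hne
                obtain ⟨m, hmF, hmw⟩ := hFdom w ⟨haw, hne⟩
                have : g.1 m = true := g.2.2.1 m w hmw hwI
                rw [hg2 m hmF] at this
                exact Bool.false_ne_true this
              exact j.2.2.1 x a (hwa ▸ hxw) haI'
            · intro hx
              exact g.2.2.1 x a (hmax x hx) hga
          exact Set.mem_singleton_iff.mpr (aux_ext heq)
      rw [hkey]
      exact (aux_open _ _).preimage continuous_subtype_val
end

section
/- Let P be an infinite partially ordered set. The following are equivalent: (i) P is wqo and every ideal of P distinct from P is principal; (ii) P has no infinite antichain and every ideal of P distinct from P is finite; (iii) every proper initial segment of P is finite; (iv) every linear extension of P has order type ω (is order-isomorphic to ℕ); (v) P is well-founded, level-finite, of height ω, and for each n < ω there is m < ω such that each element of height at most n is below every element of height at least m; (vi) P embeds none of the following: an infinite antichain; a chain of order type ω* (an infinite strictly descending sequence); a chain of order type ω+1 (a strictly increasing sequence together with an element above all its terms); the direct sum ω ⊕ 1 (a strictly increasing sequence together with an element incomparable to all its terms). -/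
open Set

/-- There is a strictly increasing chain of `n + 1` elements of `P` ending at `x`
(so that `x` has height at least `n` in a well-founded poset). -/
def ChainTo {P : Type*} [PartialOrder P] (x : P) (n : ℕ) : Prop :=
  ∃ c : Fin (n + 1) → P, StrictMono c ∧ c (Fin.last n) = x

/-- `x` has height exactly `n`. -/
def HeightIs {P : Type*} [PartialOrder P] (x : P) (n : ℕ) : Prop :=
  ChainTo x n ∧ ¬ ChainTo x (n + 1)

/-!
Everything runs through the reformulation of (iii) as "every `(Ici x)ᶜ` is finite", which makes
antichains and strict down-sets finite. Hence heights are finite, the levels (antichains) are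
finite, and a point of large enough height lies above the finitely many points of small height
and everything outside their upper sets. In a linear extension every element has finitely many
predecessors, so counting them is an isomorphism onto `ℕ`.

Conversely, an infinite proper lower set `L` missing `p` contains, by well-quasi-ordering, a
strictly increasing sequence. Its lower closure is a proper ideal that is neither principal nor
finite; a linear extension listing `L` before its complement puts all of `L` below `p`; and along
a subsequence the sequence is either entirely below `p` (a copy of `ω + 1`) or entirely
incomparable to `p` (a copy of `ω ⊕ 1`).
-/

open Order

section Height
variable {P : Type*} [PartialOrder P]

theorem chainTo_iff_le_height {x : P} {n : ℕ} : ChainTo x n ↔ (n : ℕ∞) ≤ height x := by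
  constructor
  · rintro ⟨c, hc, rfl⟩
    exact length_le_height_last (p := LTSeries.mk n c hc)
  · intro h
    obtain ⟨p, hlast, rfl⟩ := exists_series_of_le_height x h
    exact ⟨p, p.strictMono, hlast⟩

theorem not_chainTo_add_one_iff {x : P} {n : ℕ} : ¬ ChainTo x (n + 1) ↔ height x ≤ n := by
  rw [chainTo_iff_le_height, not_le, Nat.cast_add_one, ENat.lt_add_one_iff (ENat.natCast_ne_top n)]

theorem heightIs_iff_height_eq {x : P} {n : ℕ} : HeightIs x n ↔ height x = n := by
  rw [HeightIs, not_chainTo_add_one_iff, chainTo_iff_le_height, le_antisymm_iff, and_comm]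

theorem isAntichain_setOf_height_eq (n : ℕ) :
    IsAntichain (· ≤ ·) {x : P | height x = n} := fun _ hx _ hy hne hxy =>
  (height_strictMono (lt_of_le_of_ne hxy hne) (hx ▸ ENat.natCast_lt_top n)).ne (hx.trans hy.symm)

end Height

section WellQuasiOrder
variable {P : Type*} [Preorder P]

theorem wellFoundedLT_iff_not_exists_descending :
    WellFoundedLT P ↔ ¬ ∃ f : ℕ → P, ∀ n, f (n + 1) < f n := by
  rw [WellFoundedLT, isWellFounded_iff, wellFounded_iff_isEmpty_descending_chain, isEmpty_subtype]
  simp only [not_exists]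

theorem wellQuasiOrderedLE_iff_not_exists :
    WellQuasiOrderedLE P ↔ (¬ ∃ A : Set P, IsAntichain (· ≤ ·) A ∧ A.Infinite) ∧
      ¬ ∃ f : ℕ → P, ∀ n, f (n + 1) < f n := by
  rw [wellQuasiOrderedLE_iff, wellFoundedLT_iff_not_exists_descending, and_comm]
  simp only [not_exists, not_and, not_infinite]

theorem isWqo_le_iff : IsWqo ((· ≤ ·) : P → P → Prop) ↔ WellQuasiOrderedLE P := by
  simp only [IsWqo, ← lt_iff_le_not_ge]
  refine ⟨fun ⟨hdesc, hanti⟩ => wellQuasiOrderedLE_iff_not_exists.2 ⟨?_, hdesc⟩, fun h => ?_⟩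
  · rintro ⟨A, hA, hAinf⟩
    let e := hAinf.natEmbedding
    exact hanti ⟨fun n => e n, fun m n hmn =>
      hA (e m).2 (e n).2 fun h => hmn (e.injective (Subtype.ext h))⟩
  · refine ⟨fun ⟨f, hf⟩ => ?_, fun ⟨f, hf⟩ => ?_⟩
    · obtain ⟨m, n, hmn, hle⟩ := wellQuasiOrdered_le f
      exact (strictAnti_nat_of_succ_lt hf hmn).not_ge hle
    · obtain ⟨m, n, hmn, hle⟩ := wellQuasiOrdered_le f
      exact hf m n hmn.ne hle

theorem isIdealRel_Iic (a : P) : IsIdealRel (· ≤ ·) (Iic a) :=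
  ⟨nonempty_Iic, fun _ _ hxy hy => hxy.trans hy, fun _ hx _ hy => ⟨a, le_rfl, hx, hy⟩⟩

theorem Monotone.isIdealRel_lowerClosure_range {f : ℕ → P} (hf : Monotone f) :
    IsIdealRel (· ≤ ·) (lowerClosure (range f) : Set P) := by
  refine ⟨⟨f 0, subset_lowerClosure (mem_range_self 0)⟩,
    fun _ _ hxy hy => (lowerClosure (range f)).lower hxy hy, ?_⟩
  rintro x ⟨_, ⟨m, rfl⟩, hxm⟩ y ⟨_, ⟨n, rfl⟩, hyn⟩
  exact ⟨f (max m n), subset_lowerClosure (mem_range_self _),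
    hxm.trans (hf (le_max_left m n)), hyn.trans (hf (le_max_right m n))⟩

theorem IsIdealRel.isLowerSet {I : Set P} (hI : IsIdealRel (· ≤ ·) I) : IsLowerSet I :=
  fun _ _ hba ha => hI.2.1 _ _ hba ha

theorem not_exists_descending_of_forall_ideal_finite
    (h : ∀ I : Set P, IsIdealRel (· ≤ ·) I → I ≠ univ → I.Finite) :
    ¬ ∃ f : ℕ → P, ∀ n, f (n + 1) < f n := by
  rintro ⟨f, hf⟩
  have hanti : StrictAnti f := strictAnti_nat_of_succ_lt hf
  -- `Iic (f 1)` misses `f 0` but contains the infinite tail of `f`.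
  refine infinite_range_of_injective (hanti.injective.comp Nat.succ_injective)
    ((h _ (isIdealRel_Iic (f 1)) fun hu => (hf 0).not_ge (eq_univ_iff_forall.1 hu (f 0))).subset ?_)
  rintro _ ⟨n, rfl⟩
  exact hanti.antitone (Nat.succ_le_succ n.zero_le)

theorem finite_compl_Ici_of_forall_isLowerSet
    (h : ∀ I : Set P, IsLowerSet I → I ≠ univ → I.Finite) (x : P) : (Ici x)ᶜ.Finite :=
  h _ (isUpperSet_Ici x).compl fun hu => eq_univ_iff_forall.1 hu x le_rfl

end WellQuasiOrder

section PartialOrder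
variable {P : Type*} [PartialOrder P]

theorem IsIdealRel.isPrincipalRel_of_finite {I : Set P} (hI : IsIdealRel (· ≤ ·) I)
    (hfin : I.Finite) : IsPrincipalRel (· ≤ ·) I := by
  obtain ⟨a, ha, hmax⟩ := hfin.exists_maximalFor id I hI.1
  refine ⟨a, ha, fun x hx => ?_⟩
  obtain ⟨z, hz, hxz, haz⟩ := hI.2.2 x hx a ha
  exact (le_antisymm haz (hmax hz haz)).symm ▸ hxz

theorem StrictMono.not_isPrincipalRel_lowerClosure_range {f : ℕ → P} (hf : StrictMono f) :
    ¬ IsPrincipalRel (· ≤ ·) (lowerClosure (range f) : Set P) := by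
  rintro ⟨a, ⟨_, ⟨n, rfl⟩, han⟩, hmax⟩
  exact (hf n.lt_succ_self).not_ge ((hmax _ (subset_lowerClosure (mem_range_self _))).trans han)

theorem exists_strictMono_of_infinite [WellQuasiOrderedLE P] {S : Set P} (hS : S.Infinite) :
    ∃ f : ℕ → P, StrictMono f ∧ ∀ n, f n ∈ S := by
  let e := hS.natEmbedding
  obtain ⟨g, hg⟩ := wellQuasiOrdered_le.exists_monotone_subseq fun n => (e n : P)
  exact ⟨fun n => e (g n), Monotone.strictMono_of_injective (fun m n h => hg m n h)
    (Subtype.val_injective.comp (e.injective.comp g.injective)), fun n => (e (g n)).2⟩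

theorem IsLowerSet.lowerClosure_range_ne_univ {L : Set P} (hL : IsLowerSet L) (hLu : L ≠ univ)
    {f : ℕ → P} (hfL : ∀ n, f n ∈ L) : (lowerClosure (range f) : Set P) ≠ univ := fun hu =>
  hLu (univ_subset_iff.1 (hu ▸ lowerClosure_le (t := ⟨L, hL⟩).2 (range_subset_iff.2 hfL)))

theorem IsLowerSet.finite_of_forall_ideal_isPrincipalRel [WellQuasiOrderedLE P]
    (h : ∀ I : Set P, IsIdealRel (· ≤ ·) I → I ≠ univ → IsPrincipalRel (· ≤ ·) I)
    {L : Set P} (hL : IsLowerSet L) (hLu : L ≠ univ) : L.Finite := by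
  by_contra hinf
  obtain ⟨f, hf, hfL⟩ := exists_strictMono_of_infinite hinf
  exact hf.not_isPrincipalRel_lowerClosure_range
    (h _ hf.monotone.isIdealRel_lowerClosure_range (hL.lowerClosure_range_ne_univ hLu hfL))

theorem IsLowerSet.finite_of_forall_ideal_finite [WellQuasiOrderedLE P]
    (h : ∀ I : Set P, IsIdealRel (· ≤ ·) I → I ≠ univ → I.Finite)
    {L : Set P} (hL : IsLowerSet L) (hLu : L ≠ univ) : L.Finite := by
  by_contra hinf
  obtain ⟨f, hf, hfL⟩ := exists_strictMono_of_infinite hinf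
  have hfin :=
    h _ hf.monotone.isIdealRel_lowerClosure_range (hL.lowerClosure_range_ne_univ hLu hfL)
  exact infinite_range_of_injective hf.injective (hfin.subset subset_lowerClosure)

theorem IsLowerSet.finite_of_not_exists_omega_add_one_or_omega_sum_one [WellQuasiOrderedLE P]
    (hsucc : ¬ ∃ f : ℕ → P, ∃ x : P, StrictMono f ∧ ∀ n, f n < x)
    (hsum : ¬ ∃ f : ℕ → P, ∃ x : P, StrictMono f ∧ ∀ n, ¬ f n ≤ x ∧ ¬ x ≤ f n)
    {L : Set P} (hL : IsLowerSet L) (hLu : L ≠ univ) : L.Finite := by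
  by_contra hinf
  obtain ⟨p, hp⟩ := ne_univ_iff_exists_notMem L |>.1 hLu
  obtain ⟨f, hf, hfL⟩ := exists_strictMono_of_infinite hinf
  have hpf : ∀ n, ¬ p ≤ f n := fun n hle => hp (hL hle (hfL n))
  rcases Filter.frequently_or_distrib.1 (Filter.Frequently.of_forall (f := Filter.atTop)
    fun n => em (f n ≤ p)) with hlt | hinc
  · obtain ⟨φ, hφ, hφp⟩ := Filter.extraction_of_frequently_atTop hlt
    exact hsucc ⟨f ∘ φ, p, hf.comp hφ, fun n => (hφp n).lt_of_not_ge (hpf _)⟩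
  · obtain ⟨φ, hφ, hφp⟩ := Filter.extraction_of_frequently_atTop hinc
    exact hsum ⟨f ∘ φ, p, hf.comp hφ, fun n => ⟨hφp n, hpf _⟩⟩

theorem IsLowerSet.finite_of_height (hlev : ∀ n : ℕ, {x : P | height x = n}.Finite)
    (hfin : ∀ x : P, ∃ n : ℕ, height x = n)
    (hbd : ∀ n : ℕ, ∃ m : ℕ, ∀ x y : P, height x ≤ n → m ≤ height y → x < y)
    {L : Set P} (hL : IsLowerSet L) (hLu : L ≠ univ) : L.Finite := by
  obtain ⟨p, hp⟩ := ne_univ_iff_exists_notMem L |>.1 hLu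
  obtain ⟨n, hn⟩ := hfin p
  obtain ⟨m, hm⟩ := hbd n
  refine ((finite_Iio m).biUnion fun k _ => hlev k).subset fun x hx => ?_
  obtain ⟨k, hk⟩ := hfin x
  refine mem_biUnion (x := k) (mem_Iio.2 (not_le.1 fun hmk => hp (hL (hm p x hn.le ?_).le hx))) hk
  exact hk ▸ Nat.cast_le.2 hmk

theorem IsLowerSet.exists_linearExtension {L : Set P} (hL : IsLowerSet L) :
    ∃ s : P → P → Prop, IsLinearOrder P s ∧ (∀ x y, x ≤ y → s x y) ∧
      ∀ x ∈ L, ∀ y ∉ L, s x y := by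
  let r : P → P → Prop := fun x y => x ≤ y ∨ (x ∈ L ∧ y ∉ L)
  have : IsPartialOrder P r :=
    { refl := fun a => Or.inl le_rfl
      trans := by
        rintro a b c (hab | ⟨ha, hb⟩) (hbc | ⟨hb', hc⟩)
        · exact Or.inl (hab.trans hbc)
        · exact Or.inr ⟨hL hab hb', hc⟩
        · exact Or.inr ⟨ha, fun hc => hb (hL hbc hc)⟩
        · exact absurd hb' hb
      antisymm := by
        rintro a b (hab | ⟨ha, hb⟩) (hba | ⟨hb', ha'⟩)
        · exact le_antisymm hab hba
        · exact absurd (hL hab hb') ha'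
        · exact absurd (hL hba ha) hb
        · exact absurd hb' hb }
  obtain ⟨s, hs, hrs⟩ := extend_partialOrder r
  exact ⟨s, hs, fun x y h => hrs x y (Or.inl h), fun x hx y hy => hrs x y (Or.inr ⟨hx, hy⟩)⟩

theorem IsLowerSet.finite_of_forall_linearExtension_equiv_nat
    (h : ∀ le' : P → P → Prop, IsLinearOrder P le' → (∀ x y : P, x ≤ y → le' x y) →
      ∃ e : P ≃ ℕ, ∀ x y : P, le' x y ↔ e x ≤ e y)
    {L : Set P} (hL : IsLowerSet L) (hLu : L ≠ univ) : L.Finite := by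
  obtain ⟨p, hp⟩ := ne_univ_iff_exists_notMem L |>.1 hLu
  obtain ⟨s, hs, hext, hLs⟩ := hL.exists_linearExtension
  obtain ⟨e, he⟩ := h s hs hext
  exact ((finite_Iic (e p)).preimage e.injective.injOn).subset
    fun x hx => (he x p).1 (hLs x hx p hp)

end PartialOrder

section LinearExtension
variable {α : Type*} {r : α → α → Prop} [IsLinearOrder α r]

noncomputable def initialRank (r : α → α → Prop) (x : α) : ℕ := {y | r y x ∧ y ≠ x}.ncard

variable (hfin : ∀ x, {y | r y x ∧ y ≠ x}.Finite)
include hfin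

theorem initialRank_lt_initialRank {x y : α} (hxy : r x y) (hne : x ≠ y) :
    initialRank r x < initialRank r y := by
  refine ncard_lt_ncard ⟨fun z hz => ⟨_root_.trans hz.1 hxy, ?_⟩,
    fun hsub => (hsub ⟨hxy, hne⟩).2 rfl⟩ (hfin y)
  rintro rfl
  exact hz.2 (antisymm hz.1 hxy)

theorem rel_iff_initialRank_le {x y : α} : r x y ↔ initialRank r x ≤ initialRank r y := by
  refine ⟨fun h => ?_, fun h => ?_⟩
  · rcases eq_or_ne x y with rfl | hne
    · exact le_rfl
    · exact (initialRank_lt_initialRank hfin h hne).le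
  · rcases total_of r x y with hxy | hyx
    · exact hxy
    rcases eq_or_ne y x with rfl | hne
    · exact hyx
    · exact absurd h (initialRank_lt_initialRank hfin hyx hne).not_ge

theorem initialRank_injective : Function.Injective (initialRank r) := fun _ _ h =>
  antisymm ((rel_iff_initialRank_le hfin).2 h.le) ((rel_iff_initialRank_le hfin).2 h.ge)

theorem initialRank_surjective [Infinite α] : Function.Surjective (initialRank r) := by
  intro k
  obtain ⟨_, ⟨x, rfl⟩, hkx⟩ :=
    (infinite_range_of_injective (initialRank_injective hfin)).exists_gt k
  -- The `initialRank x` strict predecessors of `x` have distinct ranks below `initialRank x`.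
  have himage : initialRank r '' {y | r y x ∧ y ≠ x} = Iio (initialRank r x) := by
    refine eq_of_subset_of_ncard_le (image_subset_iff.2 fun y hy =>
      initialRank_lt_initialRank hfin hy.1 hy.2) ?_ (finite_Iio _)
    rw [ncard_Iio_nat, ncard_image_of_injective _ (initialRank_injective hfin), initialRank]
  obtain ⟨y, -, hy⟩ := himage.symm ▸ mem_Iio.2 hkx
  exact ⟨y, hy⟩

theorem exists_equiv_nat_of_finite_initialSegments [Infinite α] :
    ∃ e : α ≃ ℕ, ∀ x y, r x y ↔ e x ≤ e y :=
  ⟨.ofBijective _ ⟨initialRank_injective hfin, initialRank_surjective hfin⟩,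
    fun _ _ => rel_iff_initialRank_le hfin⟩

end LinearExtension

section CofiniteUpperSets
variable {P : Type*} [PartialOrder P] (hP : ∀ x : P, (Ici x)ᶜ.Finite)
include hP

theorem finite_Iio_of_finite_compl_Ici (x : P) : (Iio x).Finite :=
  (hP x).subset fun _ hy hxy => hy.not_ge hxy

theorem IsAntichain.finite_of_finite_compl_Ici {A : Set P} (hA : IsAntichain (· ≤ ·) A) :
    A.Finite := by
  rcases A.eq_empty_or_nonempty with rfl | ⟨a, ha⟩
  · exact finite_empty
  · refine ((hP a).insert a).subset fun b hb => ?_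
    rcases eq_or_ne b a with rfl | hne
    · exact mem_insert b _
    · exact mem_insert_of_mem a (hA ha hb hne.symm)

theorem strictMono_ncard_Iio_of_finite_compl_Ici : StrictMono fun x : P => (Iio x).ncard :=
  fun _ _ hxy => ncard_lt_ncard (Iio_ssubset_Iio hxy) (finite_Iio_of_finite_compl_Ici hP _)

theorem wellFoundedLT_of_finite_compl_Ici : WellFoundedLT P :=
  (strictMono_ncard_Iio_of_finite_compl_Ici hP).wellFoundedLT

theorem wellQuasiOrderedLE_of_finite_compl_Ici : WellQuasiOrderedLE P :=
  wellQuasiOrderedLE_iff.2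
    ⟨wellFoundedLT_of_finite_compl_Ici hP, fun _ hA => hA.finite_of_finite_compl_Ici hP⟩

theorem exists_le_apply_of_injective {f : ℕ → P} (hf : f.Injective) (x : P) : ∃ n, x ≤ f n := by
  by_contra! h
  exact infinite_range_of_injective hf ((hP x).subset (range_subset_iff.2 h))

theorem height_le_ncard_Iio (x : P) : height x ≤ (Iio x).ncard := by
  have := wellFoundedLT_of_finite_compl_Ici hP
  induction x using WellFoundedLT.induction with
  | _ x ih =>
    refine height_le_coe_iff.2 fun y hy => (ih y hy).trans_lt ?_
    exact_mod_cast strictMono_ncard_Iio_of_finite_compl_Ici hP hy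

theorem exists_height_eq_coe (x : P) : ∃ n : ℕ, height x = n :=
  ENat.ne_top_iff_exists.1 ((height_le_ncard_Iio hP x).trans_lt (ENat.natCast_lt_top _)).ne
    |>.imp fun _ h => h.symm

theorem finite_setOf_height_le (n : ℕ) : {x : P | height x ≤ n}.Finite := by
  have hlevels (k : ℕ) : {x : P | height x = k}.Finite :=
    (isAntichain_setOf_height_eq k).finite_of_finite_compl_Ici hP
  refine ((finite_Iic n).biUnion fun k _ => hlevels k).subset fun x (hx : height x ≤ n) => ?_
  obtain ⟨k, hk⟩ := exists_height_eq_coe hP x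
  exact mem_biUnion (x := k) (by exact_mod_cast hk ▸ hx) hk

theorem exists_le_height [Infinite P] (n : ℕ) : ∃ x : P, n ≤ height x := by
  by_contra! h
  exact infinite_univ ((finite_setOf_height_le hP n).subset fun x _ => (h x).le)

theorem Set.Finite.exists_forall_height_lt {s : Set P} (hs : s.Finite) :
    ∃ m : ℕ, ∀ z ∈ s, height z < m := by
  choose h hh using exists_height_eq_coe hP
  obtain ⟨B, hB⟩ := (hs.image h).bddAbove
  refine ⟨B + 1, fun z hz => ?_⟩
  rw [hh z]
  exact_mod_cast Nat.lt_succ_of_le (hB (mem_image_of_mem h hz))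

theorem exists_forall_lt_of_height_le (n : ℕ) :
    ∃ m : ℕ, ∀ x y : P, height x ≤ n → m ≤ height y → x < y := by
  have hF := finite_setOf_height_le hP n
  obtain ⟨m, hm⟩ := (hF.union (hF.biUnion fun x _ => hP x)).exists_forall_height_lt hP
  refine ⟨m, fun x y hx hy => ?_⟩
  have hyG : y ∉ {x | height x ≤ n} ∪ ⋃ x ∈ {x | height x ≤ n}, (Ici x)ᶜ :=
    fun hyG => (hm y hyG).not_ge hy
  simp only [mem_union, mem_iUnion, mem_compl_iff, mem_Ici, not_or, not_exists, not_not] at hyG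
  exact lt_of_le_of_ne (hyG.2 x hx) fun hxy => hyG.1 (hxy ▸ hx)

theorem exists_equiv_nat_of_finite_compl_Ici [Infinite P] {le' : P → P → Prop}
    (hlin : IsLinearOrder P le') (hext : ∀ x y : P, x ≤ y → le' x y) :
    ∃ e : P ≃ ℕ, ∀ x y : P, le' x y ↔ e x ≤ e y :=
  exists_equiv_nat_of_finite_initialSegments fun x =>
    (hP x).subset fun _ hy hxy => hy.2 (antisymm hy.1 (hext _ _ hxy))

end CofiniteUpperSets

/-- For an infinite poset `P`, the following are equivalent:
(i) `P` is wqo and every ideal of `P` distinct from `P` is principal;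
(ii) `P` has no infinite antichain and every ideal of `P` distinct from `P` is finite;
(iii) every proper initial segment of `P` is finite;
(iv) every linear extension of `P` has order type `ω`;
(v) `P` is well-founded, level-finite, of height `ω`, and for each `n` there is `m` such
that each element of height at most `n` is below every element of height at least `m`;
(vi) `P` embeds no infinite antichain, no chain of type `ω*`, no chain of type `ω + 1`,
and no direct sum `ω ⊕ 1`. -/
theorem stmt12 {P : Type*} [PartialOrder P] (hinf : Infinite P) :
    List.TFAE [
      IsWqo ((· ≤ ·) : P → P → Prop) ∧
        ∀ I : Set P, IsIdealRel (· ≤ ·) I → I ≠ Set.univ → IsPrincipalRel (· ≤ ·) I,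
      (¬ ∃ A : Set P, IsAntichain (· ≤ ·) A ∧ A.Infinite) ∧
        ∀ I : Set P, IsIdealRel (· ≤ ·) I → I ≠ Set.univ → I.Finite,
      ∀ I : Set P, IsLowerSet I → I ≠ Set.univ → I.Finite,
      ∀ le' : P → P → Prop, IsLinearOrder P le' → (∀ x y : P, x ≤ y → le' x y) →
        ∃ e : P ≃ ℕ, ∀ x y : P, le' x y ↔ e x ≤ e y,
      WellFoundedLT P ∧ (∀ n : ℕ, {x : P | HeightIs x n}.Finite) ∧
        (∀ x : P, ∃ n : ℕ, HeightIs x n) ∧ (∀ n : ℕ, ∃ x : P, ChainTo x n) ∧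
        (∀ n : ℕ, ∃ m : ℕ, ∀ x y : P, ¬ ChainTo x (n + 1) → ChainTo y m → x < y),
      (¬ ∃ A : Set P, IsAntichain (· ≤ ·) A ∧ A.Infinite) ∧
        (¬ ∃ f : ℕ → P, ∀ n, f (n + 1) < f n) ∧
        (¬ ∃ f : ℕ → P, ∃ x : P, StrictMono f ∧ ∀ n, f n < x) ∧
        ¬ ∃ f : ℕ → P, ∃ x : P, StrictMono f ∧ ∀ n, ¬ f n ≤ x ∧ ¬ x ≤ f n
    ] := by
  -- Two passes: the negated form must be rewritten before `chainTo_iff_le_height` reaches inside.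
  simp only [not_chainTo_add_one_iff]
  simp only [heightIs_iff_height_eq, chainTo_iff_le_height]
  tfae_have 3 → 1
  | h3 => by
    have hP := finite_compl_Ici_of_forall_isLowerSet h3
    exact ⟨isWqo_le_iff.2 (wellQuasiOrderedLE_of_finite_compl_Ici hP), fun I hI hIu =>
      hI.isPrincipalRel_of_finite (h3 I hI.isLowerSet hIu)⟩
  tfae_have 1 → 3
  | ⟨hwqo, hprin⟩ => by
    have := isWqo_le_iff.1 hwqo
    exact fun L hL hLu => hL.finite_of_forall_ideal_isPrincipalRel hprin hLu
  tfae_have 3 → 2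
  | h3 => ⟨(wellQuasiOrderedLE_iff_not_exists.1 (wellQuasiOrderedLE_of_finite_compl_Ici
      (finite_compl_Ici_of_forall_isLowerSet h3))).1, fun I hI hIu => h3 I hI.isLowerSet hIu⟩
  tfae_have 2 → 3
  | ⟨hanti, hideal⟩ => by
    have := wellQuasiOrderedLE_iff_not_exists.2
      ⟨hanti, not_exists_descending_of_forall_ideal_finite hideal⟩
    exact fun L hL hLu => hL.finite_of_forall_ideal_finite hideal hLu
  tfae_have 3 → 4
  | h3 => fun _ hlin hext =>
    exists_equiv_nat_of_finite_compl_Ici (finite_compl_Ici_of_forall_isLowerSet h3) hlin hext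
  tfae_have 4 → 3
  | h4 => fun L hL hLu => hL.finite_of_forall_linearExtension_equiv_nat h4 hLu
  tfae_have 3 → 5
  | h3 => by
    have hP := finite_compl_Ici_of_forall_isLowerSet h3
    exact ⟨wellFoundedLT_of_finite_compl_Ici hP,
      fun n => (finite_setOf_height_le hP n).subset fun x hx => hx.le, exists_height_eq_coe hP,
      exists_le_height hP, exists_forall_lt_of_height_le hP⟩
  tfae_have 5 → 3
  | ⟨_, hlev, hfin, _, hbd⟩ => fun L hL hLu => hL.finite_of_height hlev hfin hbd hLu
  tfae_have 3 → 6
  | h3 => by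
    have hP := finite_compl_Ici_of_forall_isLowerSet h3
    obtain ⟨hanti, hdesc⟩ :=
      wellQuasiOrderedLE_iff_not_exists.1 (wellQuasiOrderedLE_of_finite_compl_Ici hP)
    refine ⟨hanti, hdesc, fun ⟨f, x, hf, hfx⟩ => ?_, fun ⟨f, x, hf, hfx⟩ => ?_⟩
    · obtain ⟨n, hn⟩ := exists_le_apply_of_injective hP hf.injective x
      exact (hfx n).not_ge hn
    · obtain ⟨n, hn⟩ := exists_le_apply_of_injective hP hf.injective x
      exact (hfx n).2 hn
  tfae_have 6 → 3
  | ⟨hanti, hdesc, hsucc, hsum⟩ => by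
    have := wellQuasiOrderedLE_iff_not_exists.2 ⟨hanti, hdesc⟩
    exact fun L hL hLu =>
      hL.finite_of_not_exists_omega_add_one_or_omega_sum_one hsucc hsum hLu
  tfae_finish
end
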